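/- arXiv:2307.13826 — 6 statements merged into one kernel-verified Lean document; each statement's English description precedes it below -/
import Mathlib

section
/- For every 0 < k ≤ n and every function f on level k of a weighted simplicial complex, the Dirichlet form of the up-down walk decomposes as E_{P_k^∆}(f) = (k/(k+1)) Σ_{η ∈ P_{k-1}} π_{k-1}(η) E_{Q_η}(f_η), where f_η(a) = f(η ∪ a). -/
open Finset
open scoped Classical

variable {E : Type*} [Fintype E] [DecidableEq E]

/-- `μ` is a probability distribution on the size-`n` faces (top level) of a pure
weighted simplicial complex with ground set `E`. -/
def IsDistOn (μ : Finset E → ℝ) (n : ℕ) : Prop :=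
  (∀ S, 0 ≤ μ S) ∧ (∀ S, S.card ≠ n → μ S = 0) ∧ (∑ S, μ S = 1)

/-- The induced distribution `π_k` on level `k`:
`π_k(S) = C(n,k)⁻¹ · Σ_{T ⊇ S} μ(T)` for `|S| = k`, and `0` otherwise. -/
noncomputable def piLev (μ : Finset E → ℝ) (n k : ℕ) (S : Finset E) : ℝ :=
  if S.card = k then (n.choose k : ℝ)⁻¹ * ∑ T ∈ univ.filter (fun T => S ⊆ T), μ T else 0

/-- The stationary distribution `π_{S,1}` of the local walk at the face `S`:
the one-element conditional distribution above `S`. -/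
noncomputable def piLoc (μ : Finset E → ℝ) (n : ℕ) (S : Finset E) (a : E) : ℝ :=
  piLev μ n (S.card + 1) (insert a S) / ((S.card + 1) * piLev μ n S.card S)

/-- The local walk `Q_S` at a face `S`:
`Q_S(a,b) = π_{i+2}(S∪a∪b) / ((i+2)·π_{i+1}(S∪a))` (0 when `a = b`). -/
noncomputable def localQ (μ : Finset E → ℝ) (n : ℕ) (S : Finset E) : Matrix E E ℝ :=
  Matrix.of fun a b =>
    piLev μ n (S.card + 2) (insert b (insert a S)) /
      ((S.card + 2) * piLev μ n (S.card + 1) (insert a S))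

/-- The down operator `P↓_k` from level `k` to level `k−1`. -/
noncomputable def Pdown (k : ℕ) : Matrix (Finset E) (Finset E) ℝ :=
  Matrix.of fun S T => if T ⊆ S ∧ S.card = k ∧ T.card = k - 1 then (k : ℝ)⁻¹ else 0

/-- The up operator `P↑_k` from level `k` to level `k+1`. -/
noncomputable def Pup (μ : Finset E → ℝ) (n k : ℕ) : Matrix (Finset E) (Finset E) ℝ :=
  Matrix.of fun S T => if S ⊆ T ∧ S.card = k ∧ T.card = k + 1 then
    piLev μ n (k + 1) T / (((k : ℝ) + 1) * piLev μ n k S) else 0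

/-- The multi-level down operator from level `i` to level `j ≤ i`
(remove `i−j` uniformly random elements). -/
noncomputable def PdownM (i j : ℕ) : Matrix (Finset E) (Finset E) ℝ :=
  Matrix.of fun S T => if T ⊆ S ∧ S.card = i ∧ T.card = j then (i.choose j : ℝ)⁻¹ else 0

/-- The multi-level up operator from level `j` to level `i ≥ j`
(add `i−j` elements according to the conditional distribution). -/
noncomputable def PupM (μ : Finset E → ℝ) (n j i : ℕ) : Matrix (Finset E) (Finset E) ℝ :=
  Matrix.of fun S T => if S ⊆ T ∧ S.card = j ∧ T.card = i then
    piLev μ n i T / ((i.choose j : ℝ) * piLev μ n j S) else 0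

/-- Dirichlet form `E_P(f) = (1/2)·Σ_{a,b} π(a)P(a,b)(f(a)−f(b))²`. -/
noncomputable def dirichletForm {ι : Type*} [Fintype ι] (π : ι → ℝ)
    (P : Matrix ι ι ℝ) (f : ι → ℝ) : ℝ :=
  (1 / 2) * ∑ a, ∑ b, π a * P a b * (f a - f b) ^ 2

/-- Variance `Var_π(f)` with respect to a weight `π` summing to 1. -/
noncomputable def varw {ι : Type*} [Fintype ι] (π : ι → ℝ) (f : ι → ℝ) : ℝ :=
  ∑ a, π a * (f a - ∑ b, π b * f b) ^ 2

lemma piLev_zero_mono (μ : Finset E → ℝ) (n : ℕ) (hμ : IsDistOn μ n) {j l : ℕ}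
    (hjn : j ≤ n) {S T : Finset E} (hS : S.card = j) (hST : S ⊆ T)
    (h0 : piLev μ n j S = 0) : piLev μ n l T = 0 := by
  have hc : ((n.choose j : ℕ) : ℝ) ≠ 0 := Nat.cast_ne_zero.mpr (Nat.choose_pos hjn).ne'
  rw [piLev, if_pos hS] at h0
  have hsum : ∑ R ∈ univ.filter (fun R => S ⊆ R), μ R = 0 := by
    rcases mul_eq_zero.mp h0 with h | h
    · exact absurd h (inv_ne_zero hc)
    · exact h
  have hall := (Finset.sum_eq_zero_iff_of_nonneg (fun R _ => hμ.1 R)).mp hsum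
  rw [piLev]
  split_ifs with h
  · rw [Finset.sum_eq_zero, mul_zero]
    intro R hR
    simp only [Finset.mem_filter, Finset.mem_univ, true_and] at hR hall
    exact hall R (hST.trans hR)
  · rfl

lemma sum_facets {T : Finset E} {k : ℕ} (hT : T.card = k + 1) (h : Finset E → ℝ) :
    ∑ S : Finset E, (if S ⊆ T ∧ S.card = k then h S else 0)
      = ∑ a : E, (if a ∈ T then h (T.erase a) else 0) := by
  rw [← Finset.sum_filter, ← Finset.sum_filter]
  refine (Finset.sum_bij (fun a _ => T.erase a) ?_ ?_ ?_ ?_).symm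
  · intro a ha
    simp only [Finset.mem_filter, Finset.mem_univ, true_and] at ha ⊢
    exact ⟨Finset.erase_subset _ _, by rw [Finset.card_erase_of_mem ha, hT]; omega⟩
  · intro a ha b hb hab
    simp only [Finset.mem_filter, Finset.mem_univ, true_and] at ha hb
    by_contra hne
    have : a ∈ T.erase b := Finset.mem_erase.mpr ⟨hne, ha⟩
    rw [← hab] at this
    exact (Finset.notMem_erase a T) this
  · intro S hS
    simp only [Finset.mem_filter, Finset.mem_univ, true_and] at hS
    obtain ⟨hsub, hcard⟩ := hS
    have hss : S ⊂ T := Finset.ssubset_iff_subset_ne.mpr ⟨hsub, by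
      intro hEq; rw [hEq] at hcard; omega⟩
    obtain ⟨a, haT, haS⟩ := Finset.exists_of_ssubset hss
    refine ⟨a, by simpa using haT, ?_⟩
    have hsub2 : S ⊆ T.erase a := fun x hx =>
      Finset.mem_erase.mpr ⟨fun h => haS (h ▸ hx), hsub hx⟩
    exact (Finset.eq_of_subset_of_card_le hsub2 (by
      rw [Finset.card_erase_of_mem haT, hT, hcard]; omega)).symm
  · intro a ha; rfl

lemma sum_facets2 {T : Finset E} {k : ℕ} (hT : T.card = k + 1) (w : Finset E → Finset E → ℝ) :
    ∑ S : Finset E, ∑ S' : Finset E,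
        (if (S ⊆ T ∧ S.card = k) ∧ (S' ⊆ T ∧ S'.card = k) then w S S' else 0)
      = ∑ a : E, ∑ b : E, (if a ∈ T ∧ b ∈ T then w (T.erase a) (T.erase b) else 0) := by
  have h1 : ∀ S : Finset E, ∑ S' : Finset E,
      (if (S ⊆ T ∧ S.card = k) ∧ (S' ⊆ T ∧ S'.card = k) then w S S' else 0)
      = if S ⊆ T ∧ S.card = k then
          (∑ S' : Finset E, if S' ⊆ T ∧ S'.card = k then w S S' else 0) else 0 := by
    intro S
    split_ifs with h
    · exact Finset.sum_congr rfl fun S' _ => by simp [h]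
    · exact Finset.sum_eq_zero fun S' _ => if_neg (by tauto)
  simp only [h1]
  rw [sum_facets hT]
  refine Finset.sum_congr rfl fun a _ => ?_
  split_ifs with ha
  · rw [sum_facets hT]
    exact Finset.sum_congr rfl fun b _ => by split_ifs with hb <;> simp_all
  · exact (Finset.sum_eq_zero fun b _ => by rw [if_neg (by tauto)]).symm

lemma sum_pinnings {a b : E} (hab : a ≠ b) {m : ℕ} (h : Finset E → ℝ) :
    ∑ η : Finset E, (if η.card = m ∧ a ∉ η ∧ b ∉ η then h (insert b (insert a η)) else 0)
      = ∑ T : Finset E, (if T.card = m + 2 ∧ a ∈ T ∧ b ∈ T then h T else 0) := by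
  rw [← Finset.sum_filter, ← Finset.sum_filter]
  refine Finset.sum_nbij' (i := fun η => insert b (insert a η))
    (j := fun T => (T.erase b).erase a) ?_ ?_ ?_ ?_ ?_
  · intro η hη
    simp only [Finset.mem_filter, Finset.mem_univ, true_and] at hη ⊢
    obtain ⟨hc, haη, hbη⟩ := hη
    have hb' : b ∉ insert a η := by simp [hab.symm, hbη]
    rw [Finset.card_insert_of_notMem hb', Finset.card_insert_of_notMem haη, hc]
    refine ⟨rfl, ?_, ?_⟩ <;> simp
  · intro T hT
    simp only [Finset.mem_filter, Finset.mem_univ, true_and] at hT ⊢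
    obtain ⟨hc, haT, hbT⟩ := hT
    have haTb : a ∈ T.erase b := Finset.mem_erase.mpr ⟨hab, haT⟩
    rw [Finset.card_erase_of_mem haTb, Finset.card_erase_of_mem hbT, hc]
    refine ⟨rfl, Finset.notMem_erase _ _, fun hb' => ?_⟩
    exact (Finset.notMem_erase b T) (Finset.mem_of_mem_erase hb')
  · intro η hη
    simp only [Finset.mem_filter, Finset.mem_univ, true_and] at hη
    obtain ⟨hc, haη, hbη⟩ := hη
    have hb' : b ∉ insert a η := by simp [hab.symm, hbη]
    show ((insert b (insert a η)).erase b).erase a = η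
    rw [Finset.erase_insert hb', Finset.erase_insert haη]
  · intro T hT
    simp only [Finset.mem_filter, Finset.mem_univ, true_and] at hT
    obtain ⟨hc, haT, hbT⟩ := hT
    have haTb : a ∈ T.erase b := Finset.mem_erase.mpr ⟨hab, haT⟩
    show insert b (insert a ((T.erase b).erase a)) = T
    rw [Finset.insert_erase haTb, Finset.insert_erase hbT]
  · intro η hη; rfl

lemma sum_rot {α β γ : Type*} [Fintype α] [Fintype β] [Fintype γ] (g : α → β → γ → ℝ) :
    ∑ x : α, ∑ y : β, ∑ z : γ, g x y z = ∑ y : β, ∑ z : γ, ∑ x : α, g x y z :=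
  calc ∑ x : α, ∑ y : β, ∑ z : γ, g x y z
      = ∑ y : β, ∑ x : α, ∑ z : γ, g x y z := Finset.sum_comm
    _ = ∑ y : β, ∑ z : γ, ∑ x : α, g x y z :=
        Finset.sum_congr rfl fun y _ => Finset.sum_comm


/-- the Dirichlet form of the up-down walk `P_k^∆ = P↑_k P↓_{k+1}`
decomposes over pinnings: `E_{P_k^∆}(f) = (k/(k+1))·Σ_η π_{k-1}(η)·E_{Q_η}(f_η)`,
with `f_η(a) = f(η ∪ a)`. -/
theorem updown_dirichlet_decomposition (μ : Finset E → ℝ) (n k : ℕ)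
    (hk : 0 < k) (hkn : k ≤ n) (hμ : IsDistOn μ n) (f : Finset E → ℝ) :
    dirichletForm (piLev μ n k) (Pup μ n k * Pdown (k + 1)) f
      = ((k : ℝ) / ((k : ℝ) + 1)) *
          ∑ η : Finset E, piLev μ n (k - 1) η *
            dirichletForm (piLoc μ n η) (localQ μ n η) (fun a => f (insert a η)) := by
  obtain ⟨m, rfl⟩ : ∃ m, k = m + 1 := ⟨k - 1, by omega⟩
  have hmn : m ≤ n := by omega
  have hm1n : m + 1 ≤ n := hkn
  simp only [Nat.add_sub_cancel]
  set M : ℝ := (1/2) * ∑ T : Finset E, ∑ a : E, ∑ b : E,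
      (if T.card = m + 2 ∧ a ∈ T ∧ b ∈ T then
        ((m:ℝ)+2)⁻¹ * ((m:ℝ)+2)⁻¹ * piLev μ n (m+2) T
          * (f (T.erase a) - f (T.erase b))^2
       else 0) with hM
  trans M
  · -- LHS = M
    rw [dirichletForm, hM]
    congr 1
    have expand : ∀ S S' : Finset E,
        piLev μ n (m+1) S * (Pup μ n (m+1) * Pdown (m+1+1) : Matrix (Finset E) (Finset E) ℝ) S S' * (f S - f S') ^ 2
          = ∑ T : Finset E,
              (if (S ⊆ T ∧ S.card = m+1) ∧ (S' ⊆ T ∧ S'.card = m+1) ∧ T.card = m+2 then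
                ((m:ℝ)+2)⁻¹ * ((m:ℝ)+2)⁻¹ * piLev μ n (m+2) T * (f S - f S')^2 else 0) := by
      intro S S'
      rw [Matrix.mul_apply, Finset.mul_sum, Finset.sum_mul]
      refine Finset.sum_congr rfl fun T _ => ?_
      simp only [Pup, Pdown, Matrix.of_apply]
      by_cases h1 : S ⊆ T ∧ S.card = m+1 ∧ T.card = m+1+1
      · by_cases h2 : S' ⊆ T ∧ T.card = m+1+1 ∧ S'.card = m+1+1-1
        · obtain ⟨hs, hsc, hTc⟩ := h1
          obtain ⟨hs', hTc', hsc'⟩ := h2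
          rw [if_pos ⟨hs, hsc, hTc⟩, if_pos ⟨hs', hTc', hsc'⟩,
            if_pos ⟨⟨hs, hsc⟩, ⟨hs', by omega⟩, by omega⟩]
          by_cases h0 : piLev μ n (m+1) S = 0
          · have hT0 : piLev μ n (m+1+1) T = 0 :=
              piLev_zero_mono μ n hμ hm1n hsc hs h0
            rw [h0]
            rw [show piLev μ n (m+2) T = piLev μ n (m+1+1) T from rfl, hT0]
            ring
          · have hη0 := h0
            have c1 : ((m+1:ℕ):ℝ) + 1 ≠ 0 := by positivity
            have c2 : ((m+1+1:ℕ):ℝ) ≠ 0 := by positivity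
            rw [show piLev μ n (m+2) T = piLev μ n (m+1+1) T from rfl]
            have c3 : ((m:ℝ)+2) ≠ 0 := by positivity
            field_simp
            push_cast
            ring
        · rw [if_neg h2, if_neg (show ¬((S ⊆ T ∧ S.card = m+1) ∧ (S' ⊆ T ∧ S'.card = m+1)
              ∧ T.card = m+2) from by
            rintro ⟨⟨hs, hsc⟩, ⟨hs', hsc'⟩, hTc⟩
            exact h2 ⟨hs', by omega, by omega⟩)]
          ring
      · rw [if_neg h1, if_neg (show ¬((S ⊆ T ∧ S.card = m+1) ∧ (S' ⊆ T ∧ S'.card = m+1)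
            ∧ T.card = m+2) from by
          rintro ⟨⟨hs, hsc⟩, ⟨hs', hsc'⟩, hTc⟩
          exact h1 ⟨hs, hsc, by omega⟩)]
        ring
    calc ∑ S : Finset E, ∑ S' : Finset E,
          piLev μ n (m+1) S * (Pup μ n (m+1) * Pdown (m+1+1) : Matrix (Finset E) (Finset E) ℝ) S S' * (f S - f S') ^ 2
        = ∑ S : Finset E, ∑ S' : Finset E, ∑ T : Finset E,
            (if (S ⊆ T ∧ S.card = m+1) ∧ (S' ⊆ T ∧ S'.card = m+1) ∧ T.card = m+2 then
              ((m:ℝ)+2)⁻¹ * ((m:ℝ)+2)⁻¹ * piLev μ n (m+2) T * (f S - f S')^2 else 0) :=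
          Finset.sum_congr rfl fun S _ => Finset.sum_congr rfl fun S' _ => expand S S'
      _ = ∑ T : Finset E, ∑ S : Finset E, ∑ S' : Finset E,
            (if (S ⊆ T ∧ S.card = m+1) ∧ (S' ⊆ T ∧ S'.card = m+1) ∧ T.card = m+2 then
              ((m:ℝ)+2)⁻¹ * ((m:ℝ)+2)⁻¹ * piLev μ n (m+2) T * (f S - f S')^2 else 0) := by
          exact (sum_rot fun T S S' =>
            (if (S ⊆ T ∧ S.card = m+1) ∧ (S' ⊆ T ∧ S'.card = m+1) ∧ T.card = m+2 then
              ((m:ℝ)+2)⁻¹ * ((m:ℝ)+2)⁻¹ * piLev μ n (m+2) T * (f S - f S')^2 else 0)).symm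
      _ = ∑ T : Finset E, ∑ a : E, ∑ b : E,
            (if T.card = m + 2 ∧ a ∈ T ∧ b ∈ T then
              ((m:ℝ)+2)⁻¹ * ((m:ℝ)+2)⁻¹ * piLev μ n (m+2) T
                * (f (T.erase a) - f (T.erase b))^2 else 0) := by
          refine Finset.sum_congr rfl fun T _ => ?_
          by_cases hT : T.card = m + 2
          · have e1 : ∀ S S' : Finset E,
                (if (S ⊆ T ∧ S.card = m+1) ∧ (S' ⊆ T ∧ S'.card = m+1) ∧ T.card = m+2 then
                  ((m:ℝ)+2)⁻¹ * ((m:ℝ)+2)⁻¹ * piLev μ n (m+2) T * (f S - f S')^2 else 0)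
                = (if (S ⊆ T ∧ S.card = m+1) ∧ (S' ⊆ T ∧ S'.card = m+1) then
                  ((m:ℝ)+2)⁻¹ * ((m:ℝ)+2)⁻¹ * piLev μ n (m+2) T * (f S - f S')^2 else 0) :=
              fun S S' => if_congr ⟨fun h => ⟨h.1, h.2.1⟩, fun h => ⟨h.1, h.2, hT⟩⟩ rfl rfl
            simp only [e1]
            rw [sum_facets2 (show T.card = (m+1)+1 by omega)]
            exact Finset.sum_congr rfl fun a _ => Finset.sum_congr rfl fun b _ =>
              if_congr ⟨fun h => ⟨hT, h⟩, fun h => h.2⟩ rfl rfl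
          · rw [Finset.sum_eq_zero fun S _ => Finset.sum_eq_zero fun S' _ =>
              if_neg fun h => hT h.2.2]
            exact (Finset.sum_eq_zero fun a _ => Finset.sum_eq_zero fun b _ =>
              if_neg fun h => hT h.1).symm
  · -- M = RHS
    symm
    have per : ∀ η : Finset E,
        ((m+1:ℕ):ℝ)/(((m+1:ℕ):ℝ)+1) * (piLev μ n m η *
          dirichletForm (piLoc μ n η) (localQ μ n η) (fun a => f (insert a η)))
        = (1/2) * ∑ a : E, ∑ b : E,
            (if η.card = m ∧ a ∉ η ∧ b ∉ η ∧ a ≠ b then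
              ((m:ℝ)+2)⁻¹ * ((m:ℝ)+2)⁻¹ * piLev μ n (m+2) (insert b (insert a η))
                * (f (insert a η) - f (insert b η))^2 else 0) := by
      intro η
      rw [dirichletForm]
      rw [show ((m+1:ℕ):ℝ)/(((m+1:ℕ):ℝ)+1) * (piLev μ n m η *
          ((1/2) * ∑ a : E, ∑ b : E, piLoc μ n η a * localQ μ n η a b
            * (f (insert a η) - f (insert b η))^2))
        = (1/2) * ∑ a : E, ∑ b : E, (((m+1:ℕ):ℝ)/(((m+1:ℕ):ℝ)+1) * piLev μ n m η) *
            (piLoc μ n η a * localQ μ n η a b * (f (insert a η) - f (insert b η))^2) from by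
          simp only [Finset.mul_sum]
          exact Finset.sum_congr rfl fun a _ => Finset.sum_congr rfl fun b _ => by ring]
      congr 1
      refine Finset.sum_congr rfl fun a _ => Finset.sum_congr rfl fun b _ => ?_
      by_cases hc : η.card = m
      · by_cases haη : a ∈ η
        · have hz : piLoc μ n η a = 0 := by
            rw [piLoc, Finset.insert_eq_self.mpr haη, piLev, if_neg (by omega), zero_div]
          rw [hz, if_neg (by tauto)]
          ring
        · by_cases hbins : b ∈ insert a η
          · have hz : localQ μ n η a b = 0 := by
              simp only [localQ, Matrix.of_apply]
              rw [Finset.insert_eq_self.mpr hbins, piLev,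
                if_neg (by rw [Finset.card_insert_of_notMem haη]; omega), zero_div]
            rw [hz, if_neg (by
              simp only [Finset.mem_insert] at hbins
              tauto)]
            ring
          · simp only [Finset.mem_insert, not_or] at hbins
            obtain ⟨hba, hbη⟩ := hbins
            have hab : a ≠ b := fun h => hba h.symm
            have hca : (insert a η).card = m + 1 := by
              rw [Finset.card_insert_of_notMem haη, hc]
            have hb' : b ∉ insert a η := by simp [hba, hbη]
            rw [if_pos ⟨hc, haη, hbη, hab⟩]
            simp only [piLoc, localQ, Matrix.of_apply, hc]
            by_cases h0 : piLev μ n (m+1) (insert a η) = 0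
            · have h2 : piLev μ n (m+2) (insert b (insert a η)) = 0 :=
                piLev_zero_mono μ n hμ hm1n hca (Finset.subset_insert _ _) h0
              rw [h0, h2]
              simp
            · have hη0 : piLev μ n m η ≠ 0 := fun h =>
                h0 (piLev_zero_mono μ n hμ hmn hc (Finset.subset_insert _ _) h)
              have c1 : ((m:ℝ)+1) ≠ 0 := by positivity
              have c2 : ((m:ℝ)+2) ≠ 0 := by positivity
              push_cast
              field_simp
              ring
      · have hz : piLev μ n m η = 0 := by rw [piLev, if_neg hc]
        rw [hz, if_neg (by tauto)]
        ring
    rw [Finset.mul_sum]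
    calc ∑ η : Finset E, ((m+1:ℕ):ℝ)/(((m+1:ℕ):ℝ)+1) * (piLev μ n m η *
          dirichletForm (piLoc μ n η) (localQ μ n η) (fun a => f (insert a η)))
        = ∑ η : Finset E, (1/2) * ∑ a : E, ∑ b : E,
            (if η.card = m ∧ a ∉ η ∧ b ∉ η ∧ a ≠ b then
              ((m:ℝ)+2)⁻¹ * ((m:ℝ)+2)⁻¹ * piLev μ n (m+2) (insert b (insert a η))
                * (f (insert a η) - f (insert b η))^2 else 0) :=
          Finset.sum_congr rfl fun η _ => per η
      _ = (1/2) * ∑ η : Finset E, ∑ a : E, ∑ b : E,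
            (if η.card = m ∧ a ∉ η ∧ b ∉ η ∧ a ≠ b then
              ((m:ℝ)+2)⁻¹ * ((m:ℝ)+2)⁻¹ * piLev μ n (m+2) (insert b (insert a η))
                * (f (insert a η) - f (insert b η))^2 else 0) := by
          rw [Finset.mul_sum]
      _ = M := by
          rw [hM]
          congr 1
          trans (∑ a : E, ∑ b : E, ∑ η : Finset E,
            (if η.card = m ∧ a ∉ η ∧ b ∉ η ∧ a ≠ b then
              ((m:ℝ)+2)⁻¹ * ((m:ℝ)+2)⁻¹ * piLev μ n (m+2) (insert b (insert a η))
                * (f (insert a η) - f (insert b η))^2 else 0))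
          · exact sum_rot fun η a b =>
              (if η.card = m ∧ a ∉ η ∧ b ∉ η ∧ a ≠ b then
                ((m:ℝ)+2)⁻¹ * ((m:ℝ)+2)⁻¹ * piLev μ n (m+2) (insert b (insert a η))
                  * (f (insert a η) - f (insert b η))^2 else 0)
          trans (∑ a : E, ∑ b : E, ∑ T : Finset E,
            (if T.card = m + 2 ∧ a ∈ T ∧ b ∈ T then
              ((m:ℝ)+2)⁻¹ * ((m:ℝ)+2)⁻¹ * piLev μ n (m+2) T
                * (f (T.erase a) - f (T.erase b))^2 else 0))
          · refine Finset.sum_congr rfl fun a _ => Finset.sum_congr rfl fun b _ => ?_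
            by_cases hab : a = b
            · subst hab
              rw [Finset.sum_eq_zero fun η _ => if_neg (fun h => h.2.2.2 rfl)]
              exact (Finset.sum_eq_zero fun T _ => by split_ifs <;> simp).symm
            · calc (∑ η : Finset E,
                  (if η.card = m ∧ a ∉ η ∧ b ∉ η ∧ a ≠ b then
                    ((m:ℝ)+2)⁻¹ * ((m:ℝ)+2)⁻¹ * piLev μ n (m+2) (insert b (insert a η))
                      * (f (insert a η) - f (insert b η))^2 else 0))
                  = ∑ η : Finset E,
                    (if η.card = m ∧ a ∉ η ∧ b ∉ η then
                      ((m:ℝ)+2)⁻¹ * ((m:ℝ)+2)⁻¹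
                        * piLev μ n (m+2) (insert b (insert a η))
                        * (f ((insert b (insert a η)).erase b)
                            - f ((insert b (insert a η)).erase a))^2 else 0) := by
                    refine Finset.sum_congr rfl fun η _ => ?_
                    by_cases h : η.card = m ∧ a ∉ η ∧ b ∉ η
                    · obtain ⟨hc, haη, hbη⟩ := h
                      have hb' : b ∉ insert a η := by
                        simp only [Finset.mem_insert, not_or]
                        exact ⟨fun h' => hab h'.symm, hbη⟩
                      rw [if_pos ⟨hc, haη, hbη, hab⟩, if_pos ⟨hc, haη, hbη⟩,
                        Finset.erase_insert hb',
                        Finset.erase_insert_of_ne (fun h' => hab h'.symm),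
                        Finset.erase_insert haη]
                    · rw [if_neg (by tauto), if_neg h]
                _ = ∑ T : Finset E,
                    (if T.card = m + 2 ∧ a ∈ T ∧ b ∈ T then
                      ((m:ℝ)+2)⁻¹ * ((m:ℝ)+2)⁻¹ * piLev μ n (m+2) T
                        * (f (T.erase b) - f (T.erase a))^2 else 0) :=
                  sum_pinnings hab (fun T =>
                    ((m:ℝ)+2)⁻¹ * ((m:ℝ)+2)⁻¹ * piLev μ n (m+2) T
                      * (f (T.erase b) - f (T.erase a))^2)
                _ = ∑ T : Finset E,
                    (if T.card = m + 2 ∧ a ∈ T ∧ b ∈ T then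
                      ((m:ℝ)+2)⁻¹ * ((m:ℝ)+2)⁻¹ * piLev μ n (m+2) T
                        * (f (T.erase a) - f (T.erase b))^2 else 0) := by
                    refine Finset.sum_congr rfl fun T _ => ?_
                    split_ifs
                    · ring
                    · rfl
          · exact (sum_rot fun T a b =>
              (if T.card = m + 2 ∧ a ∈ T ∧ b ∈ T then
                ((m:ℝ)+2)⁻¹ * ((m:ℝ)+2)⁻¹ * piLev μ n (m+2) T
                  * (f (T.erase a) - f (T.erase b))^2 else 0)).symm
end

section
/- For every 0 < k ≤ n and every function f on level k, the Dirichlet form of the down-up walk equals the average local variance: E_{P_k^∇}(f) = Σ_{η ∈ P_{k-1}} π_{k-1}(η) Var_{π_{η,1}}(f_η), where f_η(a) = f(η ∪ a). -/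
open Finset
open scoped Classical

variable {E : Type*} [Fintype E] [DecidableEq E]

section Helpers

lemma varw_eq_double {ι : Type*} [Fintype ι] (p g : ι → ℝ) (hp : ∑ a, p a = 1) :
    varw p g = (1 / 2) * ∑ a, ∑ b, p a * p b * (g a - g b) ^ 2 := by
  have hA : ∀ a : ι, ∑ b, p a * p b * (g a - g b) ^ 2
      = p a * (g a) ^ 2 * (∑ b, p b) + p a * (∑ b, p b * (g b) ^ 2)
        - 2 * (p a * g a) * (∑ b, p b * g b) := by
    intro a
    rw [Finset.mul_sum (f := fun b => p b * (g b) ^ 2), Finset.mul_sum (f := fun b => p b * g b),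
      Finset.mul_sum (f := fun b => p b)]
    rw [← Finset.sum_add_distrib, ← Finset.sum_sub_distrib]
    exact Finset.sum_congr rfl fun b _ => by ring
  have hB : ∑ a : ι, ∑ b, p a * p b * (g a - g b) ^ 2
      = 2 * ((∑ a, p a * (g a) ^ 2) - (∑ a, p a * g a) ^ 2) := by
    simp only [hA]
    rw [Finset.sum_sub_distrib, Finset.sum_add_distrib, ← Finset.sum_mul, ← Finset.sum_mul,
      ← Finset.sum_mul, hp]
    have h2 : ∑ a : ι, 2 * (p a * g a) = 2 * ∑ a : ι, p a * g a := by rw [Finset.mul_sum]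
    rw [h2]; ring
  have hC : varw p g = (∑ a, p a * (g a) ^ 2) - (∑ a, p a * g a) ^ 2 := by
    unfold varw
    have : ∀ a : ι, p a * (g a - ∑ b, p b * g b) ^ 2
        = p a * (g a) ^ 2 - 2 * (∑ b, p b * g b) * (p a * g a) + (∑ b, p b * g b) ^ 2 * p a := by
      intro a; ring
    simp only [this]
    rw [Finset.sum_add_distrib, Finset.sum_sub_distrib, ← Finset.mul_sum, ← Finset.mul_sum, hp]
    ring
  rw [hB, hC]; ring

/-- Sum over supersets of `η` of cardinality one more, weighted by `piLev`,
equals sum over elements inserted. -/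
lemma sum_over_supersets (μ : Finset E → ℝ) (n : ℕ) (η : Finset E) (G : Finset E → ℝ) :
    (∑ S : Finset E, if η ⊆ S ∧ S.card = η.card + 1 then
        piLev μ n (η.card + 1) S * G S else 0)
      = ∑ a : E, piLev μ n (η.card + 1) (insert a η) * G (insert a η) := by
  have hzero : ∀ a ∈ (univ : Finset E), a ∉ ηᶜ →
      piLev μ n (η.card + 1) (insert a η) * G (insert a η) = 0 := by
    intro a _ ha
    have ha' : a ∈ η := by simpa using ha
    rw [Finset.insert_eq_self.2 ha', piLev, if_neg (by omega), zero_mul]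
  rw [← Finset.sum_subset (Finset.subset_univ ηᶜ) hzero]
  rw [← Finset.sum_filter]
  refine (Finset.sum_bij (fun (a : E) (_ : a ∈ ηᶜ) => insert a η) ?_ ?_ ?_ ?_).symm
  · intro a ha
    simp only [Finset.mem_filter, Finset.mem_univ, true_and]
    have ha' : a ∉ η := by simpa using ha
    exact ⟨Finset.subset_insert _ _, by rw [Finset.card_insert_of_notMem ha']⟩
  · intro a ha b hb hab
    have hab' : insert a η = insert b η := hab
    have ha' : a ∉ η := by simpa using ha
    have : a ∈ insert b η := by rw [← hab']; exact Finset.mem_insert_self a η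
    rcases Finset.mem_insert.1 this with h | h
    · exact h
    · exact absurd h ha'
  · intro S hS
    simp only [Finset.mem_filter, Finset.mem_univ, true_and] at hS
    obtain ⟨hsub, hcard⟩ := hS
    have h1 : (S \ η).card = 1 := by
      rw [Finset.card_sdiff_of_subset hsub]; omega
    obtain ⟨a, ha⟩ := Finset.card_eq_one.1 h1
    have haS : a ∈ S \ η := ha ▸ Finset.mem_singleton_self a
    have haη : a ∉ η := (Finset.mem_sdiff.1 haS).2
    refine ⟨a, by simpa using haη, ?_⟩
    apply Finset.eq_of_subset_of_card_le
    · exact Finset.insert_subset (Finset.mem_sdiff.1 haS).1 hsub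
    · rw [Finset.card_insert_of_notMem haη, hcard]
  · intro a ha; rfl

lemma sum_over_supersets' (μ : Finset E → ℝ) (n j : ℕ) (η : Finset E) (hη : η.card = j)
    (G : Finset E → ℝ) :
    (∑ S : Finset E, if η ⊆ S ∧ S.card = j + 1 then
        piLev μ n (j + 1) S * G S else 0)
      = ∑ a : E, piLev μ n (j + 1) (insert a η) * G (insert a η) := by
  subst hη; exact sum_over_supersets μ n η G

/-- The key mass identity:
`Σ_a π_{j+1}(η ∪ a) = (j+1)·π_j(η)` for a face `η` of cardinality `j`. -/
lemma mass_identity (μ : Finset E → ℝ) (n j : ℕ) (hμ : IsDistOn μ n) (hjn : j + 1 ≤ n)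
    (η : Finset E) (hη : η.card = j) :
    ∑ a : E, piLev μ n (j + 1) (insert a η) = ((j : ℝ) + 1) * piLev μ n j η := by
  have hzero : ∀ a ∈ (univ : Finset E), a ∉ ηᶜ → piLev μ n (j + 1) (insert a η) = 0 := by
    intro a _ ha
    have ha' : a ∈ η := by simpa using ha
    rw [Finset.insert_eq_self.2 ha', piLev, if_neg (by omega)]
  rw [← Finset.sum_subset (Finset.subset_univ ηᶜ) hzero]
  have hstep : ∀ a ∈ ηᶜ, piLev μ n (j + 1) (insert a η)
      = (n.choose (j+1) : ℝ)⁻¹ * ∑ T : Finset E, if a ∈ T ∧ η ⊆ T then μ T else 0 := by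
    intro a ha
    have ha' : a ∉ η := by simpa using ha
    rw [piLev, if_pos (by rw [Finset.card_insert_of_notMem ha', hη]), Finset.sum_filter]
    congr 1
    refine Finset.sum_congr rfl fun T _ => ?_
    simp only [Finset.insert_subset_iff]
  rw [Finset.sum_congr rfl hstep, ← Finset.mul_sum, Finset.sum_comm]
  have hinner : ∀ T : Finset E, (∑ a ∈ ηᶜ, if a ∈ T ∧ η ⊆ T then μ T else 0)
      = if η ⊆ T then ((n - j : ℕ) : ℝ) * μ T else 0 := by
    intro T
    by_cases hT : η ⊆ T
    · rw [if_pos hT]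
      have e1 : (∑ a ∈ ηᶜ, if a ∈ T ∧ η ⊆ T then μ T else 0)
          = ∑ a ∈ ηᶜ ∩ T, μ T := by
        simp only [hT, and_true]
        exact Finset.sum_ite_mem _ _ _
      rw [e1, Finset.sum_const, nsmul_eq_mul]
      have hcompl : ηᶜ ∩ T = T \ η := by ext x; simp [Finset.mem_sdiff, and_comm]
      rw [hcompl]
      by_cases hμT : μ T = 0
      · rw [hμT, mul_zero, mul_zero]
      · have hTn : T.card = n := by by_contra hc; exact hμT (hμ.2.1 T hc)
        rw [Finset.card_sdiff_of_subset hT, hη, hTn]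
    · simp [hT]
  rw [Finset.sum_congr rfl (fun T _ => hinner T)]
  have hsum : (∑ T : Finset E, if η ⊆ T then ((n - j : ℕ) : ℝ) * μ T else 0)
      = ((n - j : ℕ) : ℝ) * ∑ T ∈ univ.filter (fun T => η ⊆ T), μ T := by
    rw [Finset.mul_sum, Finset.sum_filter]
  rw [hsum, piLev, if_pos hη]
  have hch : (n - j) * n.choose j = (j + 1) * n.choose (j + 1) := by
    rw [mul_comm (j+1), Nat.choose_succ_right_eq n j, mul_comm]
  have h1 : (n.choose (j+1) : ℝ) ≠ 0 := Nat.cast_ne_zero.2 (Nat.choose_pos hjn).ne'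
  have h2 : (n.choose j : ℝ) ≠ 0 := Nat.cast_ne_zero.2 (Nat.choose_pos (by omega : j ≤ n)).ne'
  have hch' : ((n - j : ℕ) : ℝ) * (n.choose j : ℝ) = ((j : ℝ) + 1) * (n.choose (j+1) : ℝ) := by
    exact_mod_cast congrArg (fun x : ℕ => (x : ℝ)) hch
  field_simp
  linear_combination (∑ T ∈ univ.filter (fun T => η ⊆ T), μ T) * hch'

/-- Vanishing of all levels above a face with zero weight. -/
lemma piLev_zero_above (μ : Finset E → ℝ) (n j : ℕ) (hμ : IsDistOn μ n) (hjn : j ≤ n)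
    (η : Finset E) (hη : η.card = j) (h0 : piLev μ n j η = 0)
    (m : ℕ) (S : Finset E) (hS : η ⊆ S) : piLev μ n m S = 0 := by
  have h2 : (n.choose j : ℝ) ≠ 0 := Nat.cast_ne_zero.2 (Nat.choose_pos hjn).ne'
  rw [piLev, if_pos hη, mul_eq_zero] at h0
  have hsum0 : ∑ T ∈ univ.filter (fun T => η ⊆ T), μ T = 0 := by
    rcases h0 with h | h
    · exact absurd h (inv_ne_zero h2)
    · exact h
  have hall : ∀ T ∈ univ.filter (fun T => η ⊆ T), μ T = 0 :=
    (Finset.sum_eq_zero_iff_of_nonneg (fun T _ => hμ.1 T)).1 hsum0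
  rw [piLev]
  split
  · rw [Finset.sum_eq_zero, mul_zero]
    intro T hT
    simp only [Finset.mem_filter, Finset.mem_univ, true_and] at hT
    exact hall T (by simp [hS.trans hT])
  · rfl

end Helpers

/-- the Dirichlet form of the down-up walk `P_k^∇ = P↓_k P↑_{k-1}`
equals the average local variance:
`E_{P_k^∇}(f) = Σ_η π_{k-1}(η)·Var_{π_{η,1}}(f_η)`, with `f_η(a) = f(η ∪ a)`. -/
theorem downup_dirichlet_eq_avg_local_variance (μ : Finset E → ℝ) (n k : ℕ)
    (hk : 0 < k) (hkn : k ≤ n) (hμ : IsDistOn μ n) (f : Finset E → ℝ) :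
    dirichletForm (piLev μ n k) (Pdown k * Pup μ n (k - 1)) f
      = ∑ η : Finset E, piLev μ n (k - 1) η *
          varw (piLoc μ n η) (fun a => f (insert a η)) := by
  obtain ⟨j, rfl⟩ : ∃ j, k = j + 1 := ⟨k - 1, (Nat.succ_pred_eq_of_pos hk).symm⟩
  simp only [Nat.add_sub_cancel]
  rw [dirichletForm]
  have hterm : ∀ S T : Finset E,
      piLev μ n (j+1) S * ((Pdown (j+1) : Matrix (Finset E) (Finset E) ℝ) * Pup μ n j) S T * (f S - f T) ^ 2
      = ∑ η : Finset E,
          piLev μ n (j+1) S * Pdown (j+1) S η * Pup μ n j η T * (f S - f T) ^ 2 := by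
    intro S T
    rw [Matrix.mul_apply, Finset.mul_sum, Finset.sum_mul]
    exact Finset.sum_congr rfl fun η _ => by ring
  simp only [hterm]
  have hswap : (∑ S : Finset E, ∑ T : Finset E, ∑ η : Finset E,
        piLev μ n (j+1) S * Pdown (j+1) S η * Pup μ n j η T * (f S - f T) ^ 2)
      = ∑ η : Finset E, ∑ S : Finset E, ∑ T : Finset E,
        piLev μ n (j+1) S * Pdown (j+1) S η * Pup μ n j η T * (f S - f T) ^ 2 := by
    have h1 : ∀ S : Finset E, (∑ T : Finset E, ∑ η : Finset E,
        piLev μ n (j+1) S * Pdown (j+1) S η * Pup μ n j η T * (f S - f T) ^ 2)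
        = ∑ η : Finset E, ∑ T : Finset E,
          piLev μ n (j+1) S * Pdown (j+1) S η * Pup μ n j η T * (f S - f T) ^ 2 :=
      fun S => Finset.sum_comm
    simp only [h1]
    exact Finset.sum_comm
  rw [hswap, Finset.mul_sum]
  refine Finset.sum_congr rfl fun η _ => ?_
  by_cases hη : η.card = j
  · -- level ok
    by_cases h0 : piLev μ n j η = 0
    · -- zero face
      rw [h0, zero_mul]
      rw [Finset.sum_eq_zero, mul_zero]
      intro S _
      apply Finset.sum_eq_zero
      intro T _
      by_cases hc : η ⊆ S ∧ S.card = j + 1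
      · have hz : piLev μ n (j+1) S = 0 :=
          piLev_zero_above μ n j hμ (by omega) η hη h0 (j+1) S hc.1
        rw [hz]; ring
      · have hz : Pdown (j+1) S η = (0 : ℝ) := by
          simp only [Pdown, Matrix.of_apply, Nat.add_sub_cancel]
          rw [if_neg (by tauto)]
        rw [hz]; ring
    · -- main case
      have hj1 : ((j : ℝ) + 1) ≠ 0 := by positivity
      have hc : ((j : ℝ) + 1) * piLev μ n j η ≠ 0 := mul_ne_zero hj1 h0
      have hploc : ∀ a : E, piLoc μ n η a
          = piLev μ n (j+1) (insert a η) / (((j : ℝ) + 1) * piLev μ n j η) := by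
        intro a
        rw [piLoc, hη]
      have hmass := mass_identity μ n j hμ hkn η hη
      have hp1 : ∑ a : E, piLoc μ n η a = 1 := by
        simp only [hploc]
        rw [← Finset.sum_div, hmass, div_self hc]
      rw [varw_eq_double _ _ hp1]
      have hD : ∀ S : Finset E, Pdown (j+1) S η
          = if η ⊆ S ∧ S.card = j + 1 then (((j+1 : ℕ)) : ℝ)⁻¹ else 0 := by
        intro S
        simp only [Pdown, Matrix.of_apply, Nat.add_sub_cancel, hη, eq_self_iff_true, and_true]
      have hU : ∀ T : Finset E, Pup μ n j η T
          = if η ⊆ T ∧ T.card = j + 1 then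
              piLev μ n (j+1) T / (((j : ℝ) + 1) * piLev μ n j η) else 0 := by
        intro T
        simp only [Pup, Matrix.of_apply, hη, eq_self_iff_true, true_and, and_true]
      have hSsum : ∀ S : Finset E,
          (∑ T : Finset E, piLev μ n (j+1) S * Pdown (j+1) S η * Pup μ n j η T
            * (f S - f T) ^ 2)
          = if η ⊆ S ∧ S.card = j + 1 then
              piLev μ n (j+1) S * ∑ T : Finset E,
                (if η ⊆ T ∧ T.card = j + 1 then
                  piLev μ n (j+1) T * ((((j+1:ℕ)):ℝ)⁻¹ / (((j : ℝ) + 1) * piLev μ n j η)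
                    * (f S - f T) ^ 2) else 0)
            else 0 := by
        intro S
        by_cases hS : η ⊆ S ∧ S.card = j + 1
        · rw [if_pos hS, Finset.mul_sum]
          refine Finset.sum_congr rfl fun T _ => ?_
          rw [hD S, hU T, if_pos hS]
          by_cases hT : η ⊆ T ∧ T.card = j + 1
          · rw [if_pos hT, if_pos hT]; ring
          · rw [if_neg hT, if_neg hT]; ring
        · rw [if_neg hS]
          apply Finset.sum_eq_zero
          intro T _
          rw [hD S, if_neg hS]; ring
      simp only [hSsum]
      rw [show (∑ S : Finset E, if η ⊆ S ∧ S.card = j + 1 then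
            piLev μ n (j+1) S * (∑ T : Finset E,
              (if η ⊆ T ∧ T.card = j + 1 then
                piLev μ n (j+1) T * ((((j+1:ℕ)):ℝ)⁻¹ / (((j : ℝ) + 1) * piLev μ n j η)
                  * (f S - f T) ^ 2) else 0)) else 0)
          = ∑ a : E, piLev μ n (j+1) (insert a η) * (∑ T : Finset E,
              (if η ⊆ T ∧ T.card = j + 1 then
                piLev μ n (j+1) T * ((((j+1:ℕ)):ℝ)⁻¹ / (((j : ℝ) + 1) * piLev μ n j η)
                  * (f (insert a η) - f T) ^ 2) else 0))
        from sum_over_supersets' μ n j η hη _]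
      have hTsum : ∀ a : E,
          (∑ T : Finset E, (if η ⊆ T ∧ T.card = j + 1 then
              piLev μ n (j+1) T * ((((j+1:ℕ)):ℝ)⁻¹ / (((j : ℝ) + 1) * piLev μ n j η)
                * (f (insert a η) - f T) ^ 2) else 0))
          = ∑ b : E, piLev μ n (j+1) (insert b η)
              * ((((j+1:ℕ)):ℝ)⁻¹ / (((j : ℝ) + 1) * piLev μ n j η)
                * (f (insert a η) - f (insert b η)) ^ 2) :=
        fun a => sum_over_supersets' μ n j η hη _
      simp only [hTsum, hploc]
      simp only [Finset.mul_sum]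
      refine Finset.sum_congr rfl fun a _ => ?_
      refine Finset.sum_congr rfl fun b _ => ?_
      have hcast : (((j+1:ℕ)):ℝ) = (j : ℝ) + 1 := by push_cast; ring
      rw [hcast]
      field_simp
  · -- wrong level
    have hz : piLev μ n j η = 0 := by rw [piLev, if_neg hη]
    rw [hz, zero_mul]
    rw [Finset.sum_eq_zero, mul_zero]
    intro S _
    apply Finset.sum_eq_zero
    intro T _
    have hzD : Pdown (j+1) S η = (0 : ℝ) := by
      simp only [Pdown, Matrix.of_apply, Nat.add_sub_cancel]
      rw [if_neg (by tauto)]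
    rw [hzD]; ring
end

section
/- For all 0 ≤ k < n and f: P_k → ℝ, the Dirichlet forms of the up-down and down-up walks at level k satisfy E_{P_k^∆}(f) ≥ (k/(k+1))·γ_{k-1}·E_{P_k^∇}(f), where γ_{k-1} is the minimum spectral gap of the local walks Q_η over faces η of size k−1. -/
open Finset
open scoped Classical

variable {E : Type*} [Fintype E] [DecidableEq E]

noncomputable def ws (μ : Finset E → ℝ) (S : Finset E) : ℝ :=
  ∑ T ∈ univ.filter (fun T => S ⊆ T), μ T
lemma ws_nonneg {μ : Finset E → ℝ} (h : ∀ S, 0 ≤ μ S) (S : Finset E) : 0 ≤ ws μ S :=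
  Finset.sum_nonneg fun T _ => h T
lemma ws_anti {μ : Finset E → ℝ} (h : ∀ S, 0 ≤ μ S) {S S' : Finset E} (hss : S ⊆ S') :
    ws μ S' ≤ ws μ S := by
  apply Finset.sum_le_sum_of_subset_of_nonneg
  · intro T hT
    simp only [mem_filter, mem_univ, true_and] at hT ⊢
    exact hss.trans hT
  · intro T _ _; exact h T
lemma piLev_of_card {μ : Finset E → ℝ} {n j : ℕ} {S : Finset E} (h : S.card = j) :
    piLev μ n j S = (n.choose j : ℝ)⁻¹ * ws μ S := by
  simp [piLev, h, ws]
lemma piLev_of_ne {μ : Finset E → ℝ} {n j : ℕ} {S : Finset E} (h : S.card ≠ j) :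
    piLev μ n j S = 0 := by
  simp [piLev, h]
lemma card_of_piLev_ne {μ : Finset E → ℝ} {n j : ℕ} {S : Finset E}
    (h : piLev μ n j S ≠ 0) : S.card = j := by
  by_contra hc; exact h (piLev_of_ne hc)
lemma piLev_nonneg {μ : Finset E → ℝ} (hμ : ∀ S, 0 ≤ μ S) (n j : ℕ) (S : Finset E) :
    0 ≤ piLev μ n j S := by
  unfold piLev; split
  · exact mul_nonneg (by positivity) (ws_nonneg hμ S)
  · exact le_refl 0
lemma ws_eq_zero {μ : Finset E → ℝ} {n j : ℕ} {S : Finset E} (hj : j ≤ n)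
    (hcard : S.card = j) (h : piLev μ n j S = 0) : ws μ S = 0 := by
  rw [piLev_of_card hcard] at h
  have hc : (n.choose j : ℝ) ≠ 0 := by
    exact_mod_cast (Nat.choose_pos hj).ne'
  rcases mul_eq_zero.1 h with h1 | h1
  · exact absurd h1 (inv_ne_zero hc)
  · exact h1
lemma piLev_zero_of_ws {μ : Finset E → ℝ} (hμ : ∀ S, 0 ≤ μ S) {n j : ℕ} {S S' : Finset E}
    (h0 : ws μ S = 0) (hsub : S ⊆ S') : piLev μ n j S' = 0 := by
  have h1 : ws μ S' = 0 :=
    le_antisymm (h0 ▸ ws_anti hμ hsub) (ws_nonneg hμ S')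
  unfold piLev
  split
  · rw [show (∑ T ∈ univ.filter (fun T => S' ⊆ T), μ T) = ws μ S' from rfl, h1, mul_zero]
  · rfl
lemma sum_superset_reindex (T : Finset E) (h : Finset E → ℝ)
    (hh : ∀ S, h S ≠ 0 → T ⊆ S ∧ S.card = T.card + 1) :
    ∑ S, h S = ∑ a, h (insert a T) := by
  have h1 : ∑ a ∈ Tᶜ, h (insert a T) = ∑ a, h (insert a T) := by
    apply Finset.sum_subset (Finset.subset_univ _)
    intro a _ ha
    have haT : a ∈ T := by simpa using ha
    rw [Finset.insert_eq_self.2 haT]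
    by_contra hne
    exact absurd (hh T hne).2 (by omega)
  rw [← h1, ← Finset.sum_image (g := fun a => insert a T)
    (by
      intro x hx y hy hxy
      exact (Finset.insert_inj (by simpa using hx)).1 hxy)]
  symm
  apply Finset.sum_subset (Finset.subset_univ _)
  intro S _ hS
  by_contra hne
  obtain ⟨hTS, hcard⟩ := hh S hne
  have hne' : (S \ T).Nonempty := by
    rw [← Finset.card_pos, Finset.card_sdiff_of_subset hTS]
    omega
  obtain ⟨a, ha⟩ := hne'
  rw [Finset.mem_sdiff] at ha
  have heq : insert a T = S := by
    apply Finset.eq_of_subset_of_card_le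
    · exact Finset.insert_subset ha.1 hTS
    · rw [Finset.card_insert_of_notMem ha.2]; omega
  exact hS (Finset.mem_image.2 ⟨a, by simpa using ha.2, heq⟩)
lemma sum_subset_reindex (U : Finset E) (h : Finset E → ℝ)
    (hh : ∀ S, h S ≠ 0 → S ⊆ U ∧ S.card + 1 = U.card) :
    ∑ S, h S = ∑ x, h (U.erase x) := by
  have h1 : ∑ x ∈ U, h (U.erase x) = ∑ x, h (U.erase x) := by
    apply Finset.sum_subset (Finset.subset_univ _)
    intro x _ hx
    rw [Finset.erase_eq_of_notMem hx]
    by_contra hne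
    exact absurd (hh U hne).2 (by omega)
  rw [← h1, ← Finset.sum_image (g := fun x => U.erase x)
    (by
      intro x hx y hy hxy
      exact (Finset.erase_inj U hx).1 hxy)]
  symm
  apply Finset.sum_subset (Finset.subset_univ _)
  intro S _ hS
  by_contra hne
  obtain ⟨hSU, hcard⟩ := hh S hne
  have hne' : (U \ S).Nonempty := by
    rw [← Finset.card_pos, Finset.card_sdiff_of_subset hSU]
    omega
  obtain ⟨x, hx⟩ := hne'
  rw [Finset.mem_sdiff] at hx
  have heq : U.erase x = S := by
    symm
    apply Finset.eq_of_subset_of_card_le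
    · exact Finset.subset_erase.2 ⟨hSU, hx.2⟩
    · rw [Finset.card_erase_of_mem hx.1]; omega
  exact hS (Finset.mem_image.2 ⟨x, by simpa using hx.1, heq⟩)
lemma half_double_sum_eq_varw {ι : Type*} [Fintype ι] (π : ι → ℝ) (g : ι → ℝ)
    (h1 : ∑ a, π a = 1) :
    (1 / 2) * ∑ a, ∑ b, π a * π b * (g a - g b) ^ 2 = varw π g := by
  have hL : ∀ a : ι, ∑ b, π a * π b * (g a - g b) ^ 2
      = (π a * g a ^ 2) * (∑ b, π b) - (2 * (π a * g a)) * (∑ b, π b * g b)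
        + π a * (∑ b, π b * g b ^ 2) := by
    intro a
    rw [Finset.mul_sum, Finset.mul_sum, Finset.mul_sum, ← Finset.sum_sub_distrib,
      ← Finset.sum_add_distrib]
    congr 1; funext b; ring
  have hR : ∀ a : ι, π a * (g a - ∑ b, π b * g b) ^ 2
      = π a * g a ^ 2 - (2 * (∑ b, π b * g b)) * (π a * g a)
        + (∑ b, π b * g b) ^ 2 * π a := by
    intro a; ring
  rw [show (∑ a, ∑ b, π a * π b * (g a - g b) ^ 2) = ∑ a : ι, ((π a * g a ^ 2) * (∑ b, π b)
      - (2 * (π a * g a)) * (∑ b, π b * g b) + π a * (∑ b, π b * g b ^ 2)) from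
    Finset.sum_congr rfl fun a _ => hL a]
  unfold varw
  rw [show (∑ a, π a * (g a - ∑ b, π b * g b) ^ 2) = ∑ a : ι, (π a * g a ^ 2
      - (2 * (∑ b, π b * g b)) * (π a * g a) + (∑ b, π b * g b) ^ 2 * π a) from
    Finset.sum_congr rfl fun a _ => hR a]
  rw [Finset.sum_add_distrib, Finset.sum_sub_distrib, Finset.sum_add_distrib,
    Finset.sum_sub_distrib, ← Finset.sum_mul, ← Finset.sum_mul, ← Finset.sum_mul,
    ← Finset.mul_sum, ← Finset.mul_sum, h1]
  rw [← Finset.mul_sum, h1, mul_one]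
  ring
lemma sum_piLev_insert {μ : Finset E → ℝ} {n m : ℕ} (hμ : IsDistOn μ n) (hm : m < n)
    {T : Finset E} (hT : T.card = m) :
    ∑ a, piLev μ n (m + 1) (insert a T) = ((m : ℝ) + 1) * piLev μ n m T := by
  obtain ⟨hpos, hsupp, -⟩ := hμ
  have key : ∀ a, piLev μ n (m + 1) (insert a T)
      = (n.choose (m+1) : ℝ)⁻¹ * ∑ R, if a ∈ R ∧ a ∉ T ∧ T ⊆ R then μ R else 0 := by
    intro a
    by_cases ha : a ∈ T
    · rw [Finset.insert_eq_self.2 ha, piLev_of_ne (by omega)]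
      simp [ha]
    · rw [piLev_of_card (by rw [Finset.card_insert_of_notMem ha, hT])]
      unfold ws
      rw [Finset.sum_filter]
      congr 1
      apply Finset.sum_congr rfl
      intro R _
      congr 1
      simp only [Finset.insert_subset_iff, eq_iff_iff]
      tauto
  simp_rw [key]
  rw [← Finset.mul_sum, Finset.sum_comm]
  have inner : ∀ R : Finset E, (∑ a, if a ∈ R ∧ a ∉ T ∧ T ⊆ R then μ R else 0)
      = if T ⊆ R then ((n : ℝ) - m) * μ R else 0 := by
    intro R
    by_cases hTR : T ⊆ R
    · simp only [hTR, and_true, if_true]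
      have : ∀ a, (if a ∈ R ∧ a ∉ T then μ R else 0) = if a ∈ R \ T then μ R else 0 := by
        intro a; simp [Finset.mem_sdiff]
      simp_rw [this]
      rw [Finset.sum_ite_mem, Finset.univ_inter, Finset.sum_const, nsmul_eq_mul]
      by_cases hR : μ R = 0
      · simp [hR]
      · have hcard : R.card = n := by by_contra hc; exact hR (hsupp R hc)
        rw [Finset.card_sdiff_of_subset hTR, hcard, hT]
        congr 1
        have : m ≤ n := le_of_lt hm
        push_cast [Nat.cast_sub this]
        ring
    · simp [hTR]
  simp_rw [inner]
  rw [← Finset.sum_filter, ← Finset.mul_sum, ← ws]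
  rw [piLev_of_card hT]
  have h1 : (n.choose (m+1) : ℝ) ≠ 0 := by exact_mod_cast (Nat.choose_pos hm).ne'
  have h2 : (n.choose m : ℝ) ≠ 0 := by exact_mod_cast (Nat.choose_pos hm.le).ne'
  have hid : (n.choose (m+1) * (m+1) : ℝ) = (n.choose m : ℝ) * ((n:ℝ) - m) := by
    have := Nat.choose_succ_right_eq n m
    have hcast : ((n.choose (m+1) * (m+1) : ℕ) : ℝ) = ((n.choose m * (n - m) : ℕ) : ℝ) := by
      exact_mod_cast congrArg (Nat.cast (R := ℝ)) this
    push_cast [Nat.cast_sub hm.le] at hcast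
    exact_mod_cast hcast
  field_simp
  linear_combination (-1 : ℝ) * ws μ T * hid
lemma termA {μ : Finset E → ℝ} {n m : ℕ} (hμ : IsDistOn μ n) (hm1 : m + 1 ≤ n)
    (T : Finset E) (a b : E) :
    piLev μ n (m + 1) (insert a T) * (Pdown (m + 1) (insert a T) T * Pup μ n m T (insert b T))
      = piLev μ n m T * piLoc μ n T a * piLoc μ n T b := by
  by_cases hT : T.card = m
  · by_cases ha : a ∈ T
    · have hz : piLoc μ n T a = 0 := by
        unfold piLoc
        rw [Finset.insert_eq_self.2 ha, piLev_of_ne (by omega), zero_div]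
      have h1 : Pdown (m + 1) T T = 0 := by
        unfold Pdown; rw [Matrix.of_apply, if_neg]; rintro ⟨-, h2, -⟩; omega
      rw [Finset.insert_eq_self.2 ha, h1, hz]; ring
    · by_cases hb : b ∈ T
      · have hz : piLoc μ n T b = 0 := by
          unfold piLoc; rw [Finset.insert_eq_self.2 hb, piLev_of_ne (by omega), zero_div]
        have h1 : Pup μ n m T (insert b T) = 0 := by
          unfold Pup; rw [Matrix.of_apply, if_neg]
          rw [Finset.insert_eq_self.2 hb]; rintro ⟨-, -, h2⟩; omega
        rw [h1, hz]; ring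
      · have hca : (insert a T).card = m + 1 := by
          rw [Finset.card_insert_of_notMem ha, hT]
        have hcb : (insert b T).card = m + 1 := by
          rw [Finset.card_insert_of_notMem hb, hT]
        have h1 : Pdown (m + 1) (insert a T) T = (((m : ℕ) : ℝ) + 1)⁻¹ := by
          unfold Pdown
          rw [Matrix.of_apply, if_pos ⟨Finset.subset_insert _ _, hca, by omega⟩]
          push_cast; ring
        have h2 : Pup μ n m T (insert b T)
            = piLev μ n (m + 1) (insert b T) / ((((m : ℕ) : ℝ) + 1) * piLev μ n m T) := by
          unfold Pup; rw [Matrix.of_apply, if_pos ⟨Finset.subset_insert _ _, hT, hcb⟩]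
        have h3 : piLoc μ n T a
            = piLev μ n (m + 1) (insert a T) / ((((m : ℕ) : ℝ) + 1) * piLev μ n m T) := by
          unfold piLoc; rw [hT]
        have h4 : piLoc μ n T b
            = piLev μ n (m + 1) (insert b T) / ((((m : ℕ) : ℝ) + 1) * piLev μ n m T) := by
          unfold piLoc; rw [hT]
        rw [h1, h2, h3, h4]
        by_cases h0 : piLev μ n m T = 0
        · have hw : ws μ T = 0 := ws_eq_zero (by omega) hT h0
          rw [h0, piLev_zero_of_ws hμ.1 hw (Finset.subset_insert a T)]
          simp
        · have hm0 : (((m : ℕ) : ℝ) + 1) ≠ 0 := by positivity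
          field_simp
  · have h1 : Pdown (m + 1) (insert a T) T = 0 := by
      unfold Pdown
      rw [Matrix.of_apply, if_neg (by simp; omega)]
    rw [h1, piLev_of_ne hT]; ring
lemma stepA {μ : Finset E → ℝ} {n m : ℕ} (hμ : IsDistOn μ n) (hm1 : m + 1 ≤ n)
    (f : Finset E → ℝ) :
    ∑ S, ∑ S', piLev μ n (m + 1) S * ((Pdown (m + 1) * Pup μ n m : Matrix (Finset E) (Finset E) ℝ)) S S' * (f S - f S') ^ 2
      = ∑ T, ∑ a, ∑ b, piLev μ n m T * piLoc μ n T a * piLoc μ n T b *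
          (f (insert a T) - f (insert b T)) ^ 2 := by
  have e1 : ∀ S S' : Finset E,
      piLev μ n (m + 1) S * ((Pdown (m + 1) * Pup μ n m : Matrix (Finset E) (Finset E) ℝ)) S S' * (f S - f S') ^ 2
      = ∑ T, piLev μ n (m + 1) S * (Pdown (m + 1) S T * Pup μ n m T S') * (f S - f S') ^ 2 := by
    intro S S'
    rw [Matrix.mul_apply, Finset.mul_sum, Finset.sum_mul]
  simp_rw [e1]
  rw [show (∑ S, ∑ S', ∑ T, piLev μ n (m + 1) S * (Pdown (m + 1) S T * Pup μ n m T S') *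
        (f S - f S') ^ 2)
      = ∑ S : Finset E, ∑ T : Finset E, ∑ S', piLev μ n (m + 1) S *
        (Pdown (m + 1) S T * Pup μ n m T S') * (f S - f S') ^ 2 from
    Finset.sum_congr rfl fun S _ => Finset.sum_comm, Finset.sum_comm]
  apply Finset.sum_congr rfl
  intro T _
  rw [sum_superset_reindex T (fun S => ∑ S', piLev μ n (m + 1) S *
      (Pdown (m + 1) S T * Pup μ n m T S') * (f S - f S') ^ 2)
    (by
      intro S hS
      obtain ⟨S', hS'⟩ := Finset.exists_ne_zero_of_sum_ne_zero hS
      have hd : Pdown (m + 1) S T ≠ 0 := by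
        intro h; apply hS'.2; simp [h]
      unfold Pdown at hd
      rw [Matrix.of_apply] at hd
      by_cases hc : T ⊆ S ∧ S.card = m + 1 ∧ T.card = m + 1 - 1
      · exact ⟨hc.1, by omega⟩
      · rw [if_neg hc] at hd; exact absurd rfl hd)]
  apply Finset.sum_congr rfl
  intro a _
  rw [sum_superset_reindex T (fun S' => piLev μ n (m + 1) (insert a T) *
      (Pdown (m + 1) (insert a T) T * Pup μ n m T S') * (f (insert a T) - f S') ^ 2)
    (by
      intro S' hS'
      have hu : Pup μ n m T S' ≠ 0 := by
        intro h; apply hS'; simp [h]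
      unfold Pup at hu
      rw [Matrix.of_apply] at hu
      by_cases hc : T ⊆ S' ∧ T.card = m ∧ S'.card = m + 1
      · exact ⟨hc.1, by omega⟩
      · rw [if_neg hc] at hu; exact absurd rfl hu)]
  apply Finset.sum_congr rfl
  intro b _
  rw [termA hμ hm1 T a b]
lemma triple_reindex (m : ℕ) (F G : Finset E → E → E → ℝ)
    (hF0 : ∀ S c x, ¬(S.card = m + 1 ∧ c ∉ S ∧ x ∈ S) → F S c x = 0)
    (hG0 : ∀ T a b, ¬(T.card = m ∧ a ∉ T ∧ b ∉ T ∧ a ≠ b) → G T a b = 0)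
    (hFG : ∀ S c x, S.card = m + 1 → c ∉ S → x ∈ S → F S c x = G (S.erase x) x c) :
    ∑ S, ∑ c, ∑ x, F S c x = ∑ T, ∑ a, ∑ b, G T a b := by
  have hf : ∑ p : Finset E × E × E, F p.1 p.2.1 p.2.2 = ∑ S, ∑ c, ∑ x, F S c x := by
    rw [Fintype.sum_prod_type]
    apply Finset.sum_congr rfl; intro S _
    rw [Fintype.sum_prod_type]
  have hg : ∑ p : Finset E × E × E, G p.1 p.2.1 p.2.2 = ∑ T, ∑ a, ∑ b, G T a b := by
    rw [Fintype.sum_prod_type]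
    apply Finset.sum_congr rfl; intro S _
    rw [Fintype.sum_prod_type]
  have hA : ∑ p ∈ Finset.univ.filter (fun p : Finset E × E × E =>
        p.1.card = m + 1 ∧ p.2.1 ∉ p.1 ∧ p.2.2 ∈ p.1), F p.1 p.2.1 p.2.2
      = ∑ p : Finset E × E × E, F p.1 p.2.1 p.2.2 :=
    Finset.sum_filter_of_ne (fun p _ hp => by by_contra hc; exact hp (hF0 _ _ _ hc))
  have hB : ∑ p ∈ Finset.univ.filter (fun p : Finset E × E × E =>
        p.1.card = m ∧ p.2.1 ∉ p.1 ∧ p.2.2 ∉ p.1 ∧ p.2.1 ≠ p.2.2), G p.1 p.2.1 p.2.2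
      = ∑ p : Finset E × E × E, G p.1 p.2.1 p.2.2 :=
    Finset.sum_filter_of_ne (fun p _ hp => by by_contra hc; exact hp (hG0 _ _ _ hc))
  rw [← hf, ← hg, ← hA, ← hB]
  refine Finset.sum_bij' (fun p _ => (p.1.erase p.2.2, p.2.2, p.2.1))
    (fun q _ => (insert q.2.1 q.1, q.2.2, q.2.1)) ?_ ?_ ?_ ?_ ?_
  · intro p hp
    simp only [Finset.mem_filter, Finset.mem_univ, true_and] at hp ⊢
    obtain ⟨h1, h2, h3⟩ := hp
    refine ⟨by rw [Finset.card_erase_of_mem h3]; omega, Finset.notMem_erase _ _,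
      fun hc => h2 (Finset.erase_subset _ _ hc), fun hc => h2 (hc ▸ h3)⟩
  · intro q hq
    simp only [Finset.mem_filter, Finset.mem_univ, true_and] at hq ⊢
    obtain ⟨h1, h2, h3, h4⟩ := hq
    refine ⟨by rw [Finset.card_insert_of_notMem h2]; omega,
      by simp only [Finset.mem_insert, not_or]; exact ⟨fun h => h4 h.symm, h3⟩,
      Finset.mem_insert_self _ _⟩
  · intro p hp
    simp only [Finset.mem_filter, Finset.mem_univ, true_and] at hp
    obtain ⟨h1, h2, h3⟩ := hp
    exact Prod.ext (by simp [Finset.insert_erase h3]) rfl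
  · intro q hq
    simp only [Finset.mem_filter, Finset.mem_univ, true_and] at hq
    obtain ⟨h1, h2, h3, h4⟩ := hq
    exact Prod.ext (by simp [Finset.erase_insert h2]) rfl
  · intro p hp
    simp only [Finset.mem_filter, Finset.mem_univ, true_and] at hp
    obtain ⟨h1, h2, h3⟩ := hp
    exact hFG _ _ _ h1 h2 h3
lemma termB {μ : Finset E → ℝ} {n m : ℕ} (hμ : IsDistOn μ n) (hm2 : m + 2 ≤ n)
    (f : Finset E → ℝ) (S : Finset E) (c x : E)
    (h1 : S.card = m + 1) (h2 : c ∉ S) (h3 : x ∈ S) :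
    piLev μ n (m + 1) S * (Pup μ n (m + 1) S (insert c S) *
        Pdown (m + 2) (insert c S) ((insert c S).erase x)) *
      (f S - f ((insert c S).erase x)) ^ 2
    = (((m : ℝ) + 1) / ((m : ℝ) + 2)) * (piLev μ n m (S.erase x) *
        (piLoc μ n (S.erase x) x * localQ μ n (S.erase x) x c) *
      (f (insert x (S.erase x)) - f (insert c (S.erase x))) ^ 2) := by
  have hxc : x ≠ c := fun h => h2 (h ▸ h3)
  have hTcard : (S.erase x).card = m := by rw [Finset.card_erase_of_mem h3, h1]; omega
  have hins : insert x (S.erase x) = S := Finset.insert_erase h3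
  have herase : (insert c S).erase x = insert c (S.erase x) :=
    Finset.erase_insert_of_ne hxc.symm
  have hcS : (insert c S).card = m + 2 := by rw [Finset.card_insert_of_notMem h2, h1]
  have hup : Pup μ n (m + 1) S (insert c S)
      = piLev μ n (m + 2) (insert c S) / ((((m : ℝ)) + 2) * piLev μ n (m + 1) S) := by
    unfold Pup
    rw [Matrix.of_apply, if_pos ⟨Finset.subset_insert _ _, h1, hcS⟩,
      show m + 1 + 1 = m + 2 from rfl]
    push_cast
    ring_nf
  have hdown : Pdown (m + 2) (insert c S) ((insert c S).erase x)
      = (((m : ℝ)) + 2)⁻¹ := by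
    unfold Pdown
    rw [Matrix.of_apply, if_pos ⟨Finset.erase_subset _ _,  hcS, by
      rw [Finset.card_erase_of_mem (Finset.mem_insert_of_mem h3), hcS]⟩]
    push_cast
    ring_nf
  have hloc : piLoc μ n (S.erase x) x
      = piLev μ n (m + 1) S / ((((m : ℝ)) + 1) * piLev μ n m (S.erase x)) := by
    unfold piLoc
    rw [hTcard, hins]
  have hQ : localQ μ n (S.erase x) x c
      = piLev μ n (m + 2) (insert c S) / ((((m : ℝ)) + 2) * piLev μ n (m + 1) S) := by
    unfold localQ
    rw [Matrix.of_apply, hTcard, hins]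
  rw [hup, hdown, hloc, hQ, hins, herase]
  by_cases hP1 : piLev μ n (m + 1) S = 0
  · rw [hP1]
    simp
  · have hP0 : piLev μ n m (S.erase x) ≠ 0 := by
      intro h0
      exact hP1 (piLev_zero_of_ws hμ.1 (ws_eq_zero (by omega) hTcard h0)
        (Finset.erase_subset _ _))
    have e1 : ((m : ℝ) + 1) ≠ 0 := by positivity
    have e2 : ((m : ℝ) + 2) ≠ 0 := by positivity
    field_simp
lemma stepB {μ : Finset E → ℝ} {n m : ℕ} (hμ : IsDistOn μ n) (hm2 : m + 2 ≤ n)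
    (f : Finset E → ℝ) :
    ∑ S, ∑ S', piLev μ n (m + 1) S *
        ((Pup μ n (m + 1) * Pdown (m + 2) : Matrix (Finset E) (Finset E) ℝ)) S S' *
        (f S - f S') ^ 2
      = ∑ T, ∑ a, ∑ b, (((m : ℝ) + 1) / ((m : ℝ) + 2)) * (piLev μ n m T *
          (piLoc μ n T a * localQ μ n T a b) *
          (f (insert a T) - f (insert b T)) ^ 2) := by
  have e1 : ∀ S S' : Finset E,
      piLev μ n (m + 1) S *
        ((Pup μ n (m + 1) * Pdown (m + 2) : Matrix (Finset E) (Finset E) ℝ)) S S' *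
        (f S - f S') ^ 2
      = ∑ U, piLev μ n (m + 1) S * (Pup μ n (m + 1) S U * Pdown (m + 2) U S') *
          (f S - f S') ^ 2 := by
    intro S S'
    rw [Matrix.mul_apply, Finset.mul_sum, Finset.sum_mul]
  simp_rw [e1]
  rw [show (∑ S, ∑ S', ∑ U, piLev μ n (m + 1) S * (Pup μ n (m + 1) S U * Pdown (m + 2) U S') *
        (f S - f S') ^ 2)
      = ∑ S : Finset E, ∑ U : Finset E, ∑ S', piLev μ n (m + 1) S *
        (Pup μ n (m + 1) S U * Pdown (m + 2) U S') * (f S - f S') ^ 2 from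
    Finset.sum_congr rfl fun S _ => Finset.sum_comm]
  have e2 : ∀ S : Finset E, (∑ U : Finset E, ∑ S', piLev μ n (m + 1) S *
        (Pup μ n (m + 1) S U * Pdown (m + 2) U S') * (f S - f S') ^ 2)
      = ∑ c, ∑ S', piLev μ n (m + 1) S *
        (Pup μ n (m + 1) S (insert c S) * Pdown (m + 2) (insert c S) S') * (f S - f S') ^ 2 := by
    intro S
    apply sum_superset_reindex S
    intro U hU
    obtain ⟨S', hS'⟩ := Finset.exists_ne_zero_of_sum_ne_zero hU
    have hu : Pup μ n (m + 1) S U ≠ 0 := by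
      intro h; apply hS'.2; simp [h]
    unfold Pup at hu
    rw [Matrix.of_apply] at hu
    by_cases hc : S ⊆ U ∧ S.card = m + 1 ∧ U.card = m + 1 + 1
    · exact ⟨hc.1, by omega⟩
    · rw [if_neg hc] at hu; exact absurd rfl hu
  simp_rw [e2]
  have e3 : ∀ (S : Finset E) (c : E), (∑ S', piLev μ n (m + 1) S *
        (Pup μ n (m + 1) S (insert c S) * Pdown (m + 2) (insert c S) S') * (f S - f S') ^ 2)
      = ∑ x, piLev μ n (m + 1) S *
        (Pup μ n (m + 1) S (insert c S) * Pdown (m + 2) (insert c S) ((insert c S).erase x)) *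
        (f S - f ((insert c S).erase x)) ^ 2 := by
    intro S c
    apply sum_subset_reindex (insert c S)
    intro S' hS'
    have hd : Pdown (m + 2) (insert c S) S' ≠ 0 := by
      intro h; apply hS'; simp [h]
    unfold Pdown at hd
    rw [Matrix.of_apply] at hd
    by_cases hc : S' ⊆ insert c S ∧ (insert c S).card = m + 2 ∧ S'.card = m + 2 - 1
    · exact ⟨hc.1, by omega⟩
    · rw [if_neg hc] at hd; exact absurd rfl hd
  simp_rw [e3]
  apply triple_reindex m
  · -- hF0
    intro S c x hbad
    by_cases hS : S.card = m + 1
    · by_cases hc : c ∈ S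
      · have : Pup μ n (m + 1) S (insert c S) = 0 := by
          unfold Pup
          rw [Matrix.of_apply, if_neg]
          rw [Finset.insert_eq_self.2 hc]
          rintro ⟨-, -, h⟩; omega
        rw [this]; ring
      · by_cases hx : x ∈ S
        · exact absurd ⟨hS, hc, hx⟩ hbad
        · by_cases hxc : x = c
          · subst hxc
            rw [Finset.erase_insert hc, sub_self]
            ring
          · have hxU : x ∉ insert c S := by
              simp [hxc, hx]
            have : Pdown (m + 2) (insert c S) ((insert c S).erase x) = 0 := by
              rw [Finset.erase_eq_of_notMem hxU]
              unfold Pdown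
              rw [Matrix.of_apply, if_neg]
              rintro ⟨-, h, h'⟩; omega
            rw [this]; ring
    · have : Pup μ n (m + 1) S (insert c S) = 0 := by
        unfold Pup
        rw [Matrix.of_apply, if_neg]
        rintro ⟨-, h, -⟩; exact hS h
      rw [this]; ring
  · -- hG0
    intro T a b hbad
    by_cases hT : T.card = m
    · by_cases ha : a ∈ T
      · have : piLoc μ n T a = 0 := by
          unfold piLoc
          rw [Finset.insert_eq_self.2 ha, piLev_of_ne (by omega), zero_div]
        rw [this]; ring
      · by_cases hb : b ∈ insert a T
        · have : localQ μ n T a b = 0 := by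
            unfold localQ
            rw [Matrix.of_apply, Finset.insert_eq_self.2 hb, piLev_of_ne (by
              rw [Finset.card_insert_of_notMem ha]; omega), zero_div]
          rw [this]; ring
        · simp only [Finset.mem_insert, not_or] at hb
          exact absurd ⟨hT, ha, hb.2, fun h => hb.1 h.symm⟩ hbad
    · rw [piLev_of_ne hT]; ring
  · -- hFG
    intro S c x h1 h2 h3
    exact termB hμ hm2 f S c x h1 h2 h3
lemma dirichletForm_nonneg {ι : Type*} [Fintype ι] (π : ι → ℝ) (P : Matrix ι ι ℝ)
    (f : ι → ℝ) (hπ : ∀ a, 0 ≤ π a) (hP : ∀ a b, 0 ≤ P a b) :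
    0 ≤ dirichletForm π P f := by
  unfold dirichletForm
  apply mul_nonneg (by norm_num)
  apply Finset.sum_nonneg; intro a _
  apply Finset.sum_nonneg; intro b _
  have := hπ a; have := hP a b; positivity
lemma Pup_entry_nonneg {μ : Finset E → ℝ} (hpos : ∀ S, 0 ≤ μ S) (n k : ℕ) (S T : Finset E) :
    0 ≤ Pup μ n k S T := by
  unfold Pup; rw [Matrix.of_apply]; split
  · apply div_nonneg (piLev_nonneg hpos _ _ _)
    apply mul_nonneg (by positivity) (piLev_nonneg hpos _ _ _)
  · exact le_refl 0
lemma Pdown_entry_nonneg (k : ℕ) (S T : Finset E) : 0 ≤ Pdown k S T := by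
  unfold Pdown; rw [Matrix.of_apply]; split
  · positivity
  · exact le_refl 0

/-- key technical lemma: for `0 ≤ k < n`,
`E_{P_k^∆}(f) ≥ (k/(k+1))·γ_{k-1}·E_{P_k^∇}(f)`, where `γ_{k-1}` lower bounds the
spectral gap of every local walk at a face of size `k−1`. -/
theorem updown_ge_downup (μ : Finset E → ℝ) (n k : ℕ) (hk : k < n)
    (hμ : IsDistOn μ n) (γ : ℝ)
    (hloc : ∀ η : Finset E, η.card = k - 1 → 0 < piLev μ n (k - 1) η →
      ∀ g : E → ℝ, γ * varw (piLoc μ n η) g ≤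
        dirichletForm (piLoc μ n η) (localQ μ n η) g)
    (f : Finset E → ℝ) :
    ((k : ℝ) / ((k : ℝ) + 1)) * γ *
        dirichletForm (piLev μ n k) (Pdown k * Pup μ n (k - 1)) f ≤
      dirichletForm (piLev μ n k) (Pup μ n k * Pdown (k + 1)) f := by
  have hRHS : 0 ≤ dirichletForm (piLev μ n k) (Pup μ n k * Pdown (k + 1)) f := by
    apply dirichletForm_nonneg _ _ _ (piLev_nonneg hμ.1 n k)
    intro a b
    rw [Matrix.mul_apply]
    apply Finset.sum_nonneg; intro U _
    exact mul_nonneg (Pup_entry_nonneg hμ.1 n k a U) (Pdown_entry_nonneg (k + 1) U b)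
  rcases Nat.eq_zero_or_pos k with hk0 | hkpos
  · subst hk0
    rw [Nat.cast_zero, zero_div, zero_mul, zero_mul]
    exact hRHS
  obtain ⟨m, rfl⟩ : ∃ m, k = m + 1 := ⟨k - 1, (Nat.succ_pred_eq_of_pos hkpos).symm⟩
  simp only [Nat.add_sub_cancel] at hloc ⊢
  have hm1 : m + 1 ≤ n := hk.le
  have hm2 : m + 2 ≤ n := hk
  unfold dirichletForm
  rw [stepA hμ hm1 f, stepB hμ hm2 f]
  rw [show (((m : ℕ) + 1 : ℕ) : ℝ) / ((((m : ℕ) + 1 : ℕ) : ℝ) + 1)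
      = ((m : ℝ) + 1) / ((m : ℝ) + 2) by push_cast; ring]
  set c : ℝ := ((m : ℝ) + 1) / ((m : ℝ) + 2) with hc
  have hc0 : 0 ≤ c := by positivity
  have main : ∀ T : Finset E,
      γ * (piLev μ n m T * varw (piLoc μ n T) (fun a => f (insert a T)))
      ≤ piLev μ n m T * dirichletForm (piLoc μ n T) (localQ μ n T)
          (fun a => f (insert a T)) := by
    intro T
    by_cases hP0 : piLev μ n m T = 0
    · rw [hP0]; simp
    · have hTcard : T.card = m := card_of_piLev_ne hP0
      have hP0pos : 0 < piLev μ n m T :=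
        lt_of_le_of_ne (piLev_nonneg hμ.1 n m T) (Ne.symm hP0)
      have hkey := hloc T hTcard hP0pos (fun a => f (insert a T))
      calc γ * (piLev μ n m T * varw (piLoc μ n T) (fun a => f (insert a T)))
          = piLev μ n m T * (γ * varw (piLoc μ n T) (fun a => f (insert a T))) := by ring
        _ ≤ _ := mul_le_mul_of_nonneg_left hkey hP0pos.le
  have hsum1 : ∀ T : Finset E, piLev μ n m T ≠ 0 → ∑ a, piLoc μ n T a = 1 := by
    intro T hP0
    have hTcard : T.card = m := card_of_piLev_ne hP0
    have he : ∀ a, piLoc μ n T a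
        = piLev μ n (m + 1) (insert a T) / (((m : ℝ) + 1) * piLev μ n m T) := by
      intro a; unfold piLoc; rw [hTcard]
    simp_rw [he, div_eq_mul_inv, ← Finset.sum_mul]
    rw [sum_piLev_insert hμ (by omega) hTcard, mul_inv_eq_one₀]
    exact mul_ne_zero (by positivity) hP0
  have SA : ∀ T : Finset E, (1 / 2 : ℝ) * ∑ a, ∑ b, piLev μ n m T * piLoc μ n T a *
        piLoc μ n T b * (f (insert a T) - f (insert b T)) ^ 2
      = piLev μ n m T * varw (piLoc μ n T) (fun a => f (insert a T)) := by
    intro T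
    have hpull : ∀ a : E, ∀ b : E, piLev μ n m T * piLoc μ n T a * piLoc μ n T b *
        (f (insert a T) - f (insert b T)) ^ 2
        = piLev μ n m T * (piLoc μ n T a * piLoc μ n T b *
          (f (insert a T) - f (insert b T)) ^ 2) := fun a b => by ring
    simp_rw [hpull, ← Finset.mul_sum]
    by_cases hP0 : piLev μ n m T = 0
    · rw [hP0]; simp
    · rw [← half_double_sum_eq_varw (piLoc μ n T) (fun a => f (insert a T)) (hsum1 T hP0)]
      ring
  have SB : ∀ T : Finset E, (1 / 2 : ℝ) * ∑ a, ∑ b, c * (piLev μ n m T *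
        (piLoc μ n T a * localQ μ n T a b) * (f (insert a T) - f (insert b T)) ^ 2)
      = c * (piLev μ n m T * dirichletForm (piLoc μ n T) (localQ μ n T)
          (fun a => f (insert a T))) := by
    intro T
    have hpull : ∀ a : E, ∀ b : E, c * (piLev μ n m T *
        (piLoc μ n T a * localQ μ n T a b) * (f (insert a T) - f (insert b T)) ^ 2)
        = (c * piLev μ n m T) * (piLoc μ n T a * localQ μ n T a b *
          (f (insert a T) - f (insert b T)) ^ 2) := fun a b => by ring
    simp_rw [hpull, ← Finset.mul_sum]
    unfold dirichletForm
    ring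
  conv_lhs => rw [Finset.mul_sum, Finset.mul_sum]
  conv_rhs => rw [Finset.mul_sum]
  apply Finset.sum_le_sum
  intro T _
  rw [SA T, SB T]
  calc c * γ * (piLev μ n m T * varw (piLoc μ n T) (fun a => f (insert a T)))
      = c * (γ * (piLev μ n m T * varw (piLoc μ n T) (fun a => f (insert a T)))) := by ring
    _ ≤ _ := mul_le_mul_of_nonneg_left (main T) hc0
end

section
/- For any f on level k+1 with projections f^{(k)}, f^{(k-1)} via up operators, Var_{π_{k+1}}(f^{(k+1)}) − Var_{π_{k-1}}(f^{(k-1)}) = Σ_{τ ∈ P_{k-1}} π_{k-1}(τ)·Var_{π_{τ,2}}(f_τ^{(2)}), where f_τ^{(2)}(σ) = f^{(k+1)}(τ ∪ σ) for two-element extensions σ of τ. -/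
open Finset
open scoped Classical

variable {E : Type*} [Fintype E] [DecidableEq E]

lemma varw_aux {ι : Type*} [Fintype ι] (π f : ι → ℝ) (h : ∑ a, π a = 1) :
    (∑ a, π a * (f a - ∑ b, π b * f b) ^ 2)
      = ∑ a, π a * f a ^ 2 - (∑ a, π a * f a) ^ 2 := by
  have e : ∀ a, π a * (f a - ∑ b, π b * f b) ^ 2
      = π a * f a ^ 2 - 2 * (∑ b, π b * f b) * (π a * f a)
        + (∑ b, π b * f b) ^ 2 * π a := fun a => by ring
  simp_rw [e, Finset.sum_add_distrib, Finset.sum_sub_distrib, ← Finset.mul_sum, h]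
  ring

/-- instance-free count of sets between `τ` and `T`. -/
lemma card_between (τ T : Finset E) (hτT : τ ⊆ T) (m : ℕ) (s : Finset (Finset E))
    (hs : ∀ σ, σ ∈ s ↔ (τ ⊆ σ ∧ σ.card = τ.card + m) ∧ σ ⊆ T) :
    (s.card : ℕ) = (T.card - τ.card).choose m := by
  rw [← Finset.card_sdiff_of_subset hτT, ← Finset.card_powersetCard]
  apply Finset.card_nbij' (fun σ => σ \ τ) (fun ρ => ρ ∪ τ)
  · intro σ hσ
    obtain ⟨⟨h1, h2⟩, h3⟩ := (hs σ).1 hσ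
    rw [Finset.mem_coe, Finset.mem_powersetCard]
    exact ⟨Finset.sdiff_subset_sdiff h3 le_rfl,
      by rw [Finset.card_sdiff_of_subset h1, h2, Nat.add_sub_cancel_left]⟩
  · intro ρ hρ
    rw [Finset.mem_coe, Finset.mem_powersetCard] at hρ
    obtain ⟨h1, h2⟩ := hρ
    have hd : Disjoint ρ τ := (Finset.sdiff_disjoint.mono_left h1)
    rw [Finset.mem_coe, hs]
    refine ⟨⟨Finset.subset_union_right, ?_⟩, ?_⟩
    · rw [Finset.card_union_of_disjoint hd, h2, Nat.add_comm]
    · exact Finset.union_subset ((h1.trans (Finset.sdiff_subset))) hτT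
  · intro σ hσ
    exact Finset.sdiff_union_of_subset ((hs σ).1 hσ).1.1
  · intro ρ hρ
    rw [Finset.mem_coe, Finset.mem_powersetCard] at hρ
    have hd : Disjoint ρ τ := (Finset.sdiff_disjoint.mono_left hρ.1)
    dsimp only
    rw [Finset.union_sdiff_right, Finset.sdiff_eq_self_of_disjoint hd]

/-- instance-free count of `m`-subsets of `T`. -/
lemma card_subsets (T : Finset E) (m : ℕ) (s : Finset (Finset E))
    (hs : ∀ σ, σ ∈ s ↔ σ.card = m ∧ σ ⊆ T) :
    (s.card : ℕ) = T.card.choose m := by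
  rw [← Finset.card_powersetCard]
  congr 1
  ext σ
  rw [hs, Finset.mem_powersetCard, and_comm]

/-- generic double-sum rewriting: sum of piLev over a predicate. -/
lemma sum_piLev_filter (μ : Finset E → ℝ) (n m : ℕ) (p : Finset E → Prop) :
    ∑ S : Finset E, (if p S ∧ S.card = m then piLev μ n m S else 0)
      = (n.choose m : ℝ)⁻¹ *
        ∑ T : Finset E, μ T * ((univ.filter fun S => (p S ∧ S.card = m) ∧ S ⊆ T).card : ℝ) := by
  have e : ∀ S : Finset E, (if p S ∧ S.card = m then piLev μ n m S else 0)
      = ∑ T : Finset E, (if (p S ∧ S.card = m) ∧ S ⊆ T then (n.choose m : ℝ)⁻¹ * μ T else 0) := by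
    intro S
    by_cases h : p S ∧ S.card = m
    · simp only [h, true_and, if_true, piLev, h.2, if_pos rfl, Finset.mul_sum,
        Finset.sum_filter, mul_ite, mul_zero]
    · simp [h]
  simp_rw [e]
  rw [Finset.sum_comm, Finset.mul_sum]
  refine Finset.sum_congr rfl fun T _ => ?_
  rw [Finset.sum_ite, Finset.sum_const_zero, add_zero, Finset.sum_const, nsmul_eq_mul]
  ring

lemma count_aux_one (μ : Finset E → ℝ) (n m : ℕ) (hm : m ≤ n)
    (hsupp : ∀ S : Finset E, S.card ≠ n → μ S = 0) (hsum : ∑ S : Finset E, μ S = 1)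
    (cnt : Finset E → ℝ) (hcnt : ∀ T, μ T ≠ 0 → cnt T = (n.choose m : ℝ)) :
    (n.choose m : ℝ)⁻¹ * ∑ T : Finset E, μ T * cnt T = 1 := by
  have e : ∀ T : Finset E, μ T * cnt T = μ T * (n.choose m : ℝ) := by
    intro T
    by_cases hT : μ T = 0
    · simp [hT]
    · rw [hcnt T hT]
  rw [Finset.sum_congr rfl fun T _ => e T, ← Finset.sum_mul, hsum, one_mul, inv_mul_cancel₀]
  exact Nat.cast_ne_zero.2 (Nat.choose_pos hm).ne'

lemma sum_piLev_one (μ : Finset E → ℝ) (n m : ℕ) (hm : m ≤ n) (hμ : IsDistOn μ n) :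
    ∑ S : Finset E, piLev μ n m S = 1 := by
  obtain ⟨hpos, hsupp, hsum⟩ := hμ
  refine Eq.trans ?_
    (Eq.trans (sum_piLev_filter μ n m (fun _ => True))
      (count_aux_one μ n m hm hsupp hsum _ (fun T hT => ?_)))
  · refine Finset.sum_congr rfl fun S _ => ?_
    by_cases h : S.card = m
    · rw [if_pos ⟨trivial, h⟩]
    · rw [if_neg (fun hh => h hh.2), piLev, if_neg h]
  · have hTc : T.card = n := by by_contra h; exact hT (hsupp T h)
    rw [← hTc]
    norm_cast
    exact card_subsets T m _ (fun σ => by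
      simp only [Finset.mem_filter, Finset.mem_univ, true_and])

lemma piLev_zero_of_subset (μ : Finset E → ℝ) (n m i : ℕ) (hm : m ≤ n)
    (hpos : ∀ S : Finset E, 0 ≤ μ S) {τ σ : Finset E} (hτ : τ.card = m) (hsub : τ ⊆ σ)
    (h0 : piLev μ n m τ = 0) : piLev μ n i σ = 0 := by
  rw [piLev, if_pos hτ, mul_eq_zero] at h0
  have hc : ((n.choose m : ℝ)⁻¹ : ℝ) ≠ 0 :=
    inv_ne_zero (Nat.cast_ne_zero.2 (Nat.choose_pos hm).ne')
  have hzero : ∀ T ∈ univ.filter fun T : Finset E => τ ⊆ T, μ T = 0 :=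
    (Finset.sum_eq_zero_iff_of_nonneg fun T _ => hpos T).1 (h0.resolve_left hc)
  rw [piLev]
  split
  · rw [Finset.sum_eq_zero, mul_zero]
    intro T hT
    simp only [Finset.mem_filter, Finset.mem_univ, true_and] at hT
    exact hzero T (by simp [hsub.trans hT])
  · rfl

lemma count_aux_two (μ : Finset E → ℝ) (n j : ℕ) (hjn : j + 2 ≤ n)
    (hsupp : ∀ S : Finset E, S.card ≠ n → μ S = 0)
    (τ : Finset E) (hτ : τ.card = j)
    (cnt : Finset E → ℝ)
    (hcnt : ∀ T, μ T ≠ 0 → cnt T = if τ ⊆ T then ((n - j).choose 2 : ℝ) else 0) :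
    (n.choose (j + 2) : ℝ)⁻¹ * ∑ T : Finset E, μ T * cnt T
      = ((j + 2).choose j : ℝ) * piLev μ n j τ := by
  have e : ∀ T : Finset E, μ T * cnt T
      = (if τ ⊆ T then ((n - j).choose 2 : ℝ) * μ T else 0) := by
    intro T
    by_cases hT : μ T = 0
    · simp [hT]
    · rw [hcnt T hT]
      split
      · exact mul_comm _ _
      · exact mul_zero _
  rw [Finset.sum_congr rfl fun T _ => e T, Finset.sum_ite, Finset.sum_const_zero, add_zero,
    ← Finset.mul_sum, piLev, if_pos hτ]
  have hc2 : ((n.choose (j + 2) : ℝ)) ≠ 0 := Nat.cast_ne_zero.2 (Nat.choose_pos hjn).ne'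
  have hcj : ((n.choose j : ℝ)) ≠ 0 :=
    Nat.cast_ne_zero.2 (Nat.choose_pos (by omega)).ne'
  have key : (n.choose (j + 2) : ℝ) * ((j + 2).choose j : ℝ)
      = (n.choose j : ℝ) * ((n - j).choose 2 : ℝ) := by
    have h := Nat.choose_mul (n := n) (k := j + 2) (s := j) (by omega)
    have h2 : j + 2 - j = 2 := by omega
    rw [h2] at h
    exact_mod_cast h
  have hconst : (n.choose (j + 2) : ℝ)⁻¹ * ((n - j).choose 2 : ℝ)
      = ((j + 2).choose j : ℝ) * (n.choose j : ℝ)⁻¹ := by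
    field_simp
    linear_combination -key
  rw [← mul_assoc, hconst, mul_assoc]

lemma sum_piLev_two_ext (μ : Finset E → ℝ) (n j : ℕ) (hjn : j + 2 ≤ n)
    (hμ : IsDistOn μ n) (τ : Finset E) (hτ : τ.card = j) :
    ∑ σ : Finset E, (if τ ⊆ σ ∧ σ.card = j + 2 then piLev μ n (j + 2) σ else 0)
      = ((j + 2).choose j : ℝ) * piLev μ n j τ := by
  obtain ⟨hpos, hsupp, hsum⟩ := hμ
  refine Eq.trans ?_
    (Eq.trans (sum_piLev_filter μ n (j + 2) (fun σ => τ ⊆ σ))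
      (count_aux_two μ n j hjn hsupp τ hτ _ (fun T hT => ?_)))
  · refine Finset.sum_congr rfl fun σ _ => ?_
    by_cases h : τ ⊆ σ ∧ σ.card = j + 2
    · rw [if_pos h, if_pos h]
    · rw [if_neg h, if_neg h]
  · have hTc : T.card = n := by by_contra h; exact hT (hsupp T h)
    by_cases hτT : τ ⊆ T
    · rw [if_pos hτT]
      norm_cast
      rw [show (n - j).choose 2 = (T.card - τ.card).choose 2 by rw [hTc, hτ]]
      refine card_between τ T hτT 2 _ (fun σ => ?_)
      simp only [Finset.mem_filter, Finset.mem_univ, true_and, hτ]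
    · rw [if_neg hτT]
      norm_cast
      rw [Finset.card_eq_zero, Finset.eq_empty_iff_forall_notMem]
      intro σ hσ
      simp only [Finset.mem_filter, Finset.mem_univ, true_and] at hσ
      exact hτT (hσ.1.1.trans hσ.2)

lemma varw_eq {ι : Type*} [Fintype ι] (π f : ι → ℝ) (h : ∑ a, π a = 1) :
    varw π f = ∑ a, π a * f a ^ 2 - (∑ a, π a * f a) ^ 2 := varw_aux π f h

/-- for `f` on level `k+1` with projection `f^{(k-1)} = P↑_{k-1,k+1} f`,
`Var_{π_{k+1}}(f) − Var_{π_{k-1}}(f^{(k-1)}) = Σ_τ π_{k-1}(τ)·Var_{π_{τ,2}}(f_τ^{(2)})`,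
where `π_{τ,2}` is the two-element-extension distribution above `τ` (the row of the
two-level up operator at `τ`) and `f_τ^{(2)}(σ) = f(τ ∪ σ)`. -/
theorem var_diff_two_levels (μ : Finset E → ℝ) (n k : ℕ)
    (hk : 1 ≤ k) (hkn : k + 1 ≤ n) (hμ : IsDistOn μ n) (f : Finset E → ℝ) :
    varw (piLev μ n (k + 1)) f
        - varw (piLev μ n (k - 1)) ((PupM μ n (k - 1) (k + 1)).mulVec f)
      = ∑ τ : Finset E, piLev μ n (k - 1) τ *
          varw (fun σ => PupM μ n (k - 1) (k + 1) τ σ) f := by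
  obtain ⟨j, rfl⟩ : ∃ j, k = j + 1 := ⟨k - 1, (Nat.succ_pred_eq_of_pos hk).symm⟩
  have h11 : j + 1 + 1 = j + 2 := rfl
  simp only [Nat.add_sub_cancel, h11]
  have hjn : j + 2 ≤ n := by omega
  have hj : j ≤ n := by omega
  obtain ⟨hpos, hsupp, hsum⟩ := hμ
  have hC : ((j + 2).choose j : ℝ) ≠ 0 :=
    Nat.cast_ne_zero.2 (Nat.choose_pos (by omega)).ne'
  have hPdef : ∀ τ σ : Finset E, PupM μ n j (j + 2) τ σ
      = if τ ⊆ σ ∧ τ.card = j ∧ σ.card = j + 2 then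
          piLev μ n (j + 2) σ / (((j + 2).choose j : ℝ) * piLev μ n j τ) else 0 :=
    fun τ σ => rfl
  have hmulVec : ∀ τ, (PupM μ n j (j + 2)).mulVec f τ
      = ∑ σ, PupM μ n j (j + 2) τ σ * f σ := fun τ => rfl
  -- row sums
  have hrow : ∀ τ, piLev μ n j τ ≠ 0 → ∑ σ, PupM μ n j (j + 2) τ σ = 1 := by
    intro τ hτ0
    have hτc : τ.card = j := by
      by_contra h; exact hτ0 (by rw [piLev, if_neg h])
    have hnum : (∑ σ, (if τ ⊆ σ ∧ σ.card = j + 2 then piLev μ n (j + 2) σ else 0))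
        = ((j + 2).choose j : ℝ) * piLev μ n j τ := by
      refine Eq.trans ?_ (sum_piLev_two_ext μ n j hjn ⟨hpos, hsupp, hsum⟩ τ hτc)
      refine Finset.sum_congr rfl fun σ _ => ?_
      split_ifs <;> first | rfl | tauto
    have e : ∀ σ, PupM μ n j (j + 2) τ σ
        = (if τ ⊆ σ ∧ σ.card = j + 2 then piLev μ n (j + 2) σ else 0)
            / (((j + 2).choose j : ℝ) * piLev μ n j τ) := by
      intro σ
      rw [hPdef]
      by_cases h : τ ⊆ σ ∧ σ.card = j + 2
      · rw [if_pos ⟨h.1, hτc, h.2⟩, if_pos h]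
      · rw [if_neg (fun hh => h ⟨hh.1, hh.2.2⟩), if_neg h, zero_div]
    rw [Finset.sum_congr rfl fun σ _ => e σ, ← Finset.sum_div, hnum,
      div_self (mul_ne_zero hC hτ0)]
  -- column sums
  have hcol : ∀ σ, ∑ τ, piLev μ n j τ * PupM μ n j (j + 2) τ σ = piLev μ n (j + 2) σ := by
    intro σ
    have e : ∀ τ, piLev μ n j τ * PupM μ n j (j + 2) τ σ
        = if (τ.card = j ∧ τ ⊆ σ) ∧ σ.card = j + 2 then
            piLev μ n (j + 2) σ / ((j + 2).choose j : ℝ) else 0 := by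
      intro τ
      rw [hPdef]
      by_cases h : τ ⊆ σ ∧ τ.card = j ∧ σ.card = j + 2
      · rw [if_pos h, if_pos ⟨⟨h.2.1, h.1⟩, h.2.2⟩]
        by_cases hz : piLev μ n j τ = 0
        · have hσ0 : piLev μ n (j + 2) σ = 0 :=
            piLev_zero_of_subset μ n j (j + 2) hj hpos h.2.1 h.1 hz
          rw [hz, hσ0]
          simp
        · field_simp
      · rw [if_neg h, if_neg (fun hh => h ⟨hh.1.2, hh.1.1, hh.2⟩), mul_zero]
    rw [Finset.sum_congr rfl fun τ _ => e τ]
    by_cases hσc : σ.card = j + 2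
    · have e2 : ∀ τ : Finset E,
          (if (τ.card = j ∧ τ ⊆ σ) ∧ σ.card = j + 2 then
            piLev μ n (j + 2) σ / ((j + 2).choose j : ℝ) else 0)
          = (if τ.card = j ∧ τ ⊆ σ then
              piLev μ n (j + 2) σ / ((j + 2).choose j : ℝ) else 0) := by
        intro τ
        by_cases h : τ.card = j ∧ τ ⊆ σ
        · rw [if_pos ⟨h, hσc⟩, if_pos h]
        · rw [if_neg (fun hh => h hh.1), if_neg h]
      rw [Finset.sum_congr rfl fun τ _ => e2 τ, Finset.sum_ite, Finset.sum_const_zero,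
        add_zero, Finset.sum_const, nsmul_eq_mul]
      have hcard : ((univ.filter fun τ : Finset E => τ.card = j ∧ τ ⊆ σ).card : ℕ)
          = σ.card.choose j :=
        card_subsets σ j _ (fun τ => by
          simp only [Finset.mem_filter, Finset.mem_univ, true_and])
      rw [hcard, hσc, mul_comm, div_mul_cancel₀ _ hC]
    · rw [Finset.sum_eq_zero fun τ _ => if_neg (fun hh => hσc hh.2), piLev, if_neg hσc]
  have h0sum : ∑ τ : Finset E, piLev μ n j τ = 1 :=
    sum_piLev_one μ n j hj ⟨hpos, hsupp, hsum⟩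
  have h2sum : ∑ σ : Finset E, piLev μ n (j + 2) σ = 1 :=
    sum_piLev_one μ n (j + 2) hjn ⟨hpos, hsupp, hsum⟩
  have hM : ∑ τ : Finset E, piLev μ n j τ * ((PupM μ n j (j + 2)).mulVec f τ)
      = ∑ σ, piLev μ n (j + 2) σ * f σ := by
    have e : ∀ τ, piLev μ n j τ * (PupM μ n j (j + 2)).mulVec f τ
        = ∑ σ, (piLev μ n j τ * PupM μ n j (j + 2) τ σ) * f σ := by
      intro τ
      rw [hmulVec, Finset.mul_sum]
      exact Finset.sum_congr rfl fun σ _ => (mul_assoc _ _ _).symm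
    rw [Finset.sum_congr rfl fun τ _ => e τ, Finset.sum_comm]
    exact Finset.sum_congr rfl fun σ _ => by rw [← Finset.sum_mul, hcol σ]
  have hsq : ∑ τ : Finset E, piLev μ n j τ * (∑ σ, PupM μ n j (j + 2) τ σ * f σ ^ 2)
      = ∑ σ, piLev μ n (j + 2) σ * f σ ^ 2 := by
    have e : ∀ τ : Finset E, piLev μ n j τ * (∑ σ, PupM μ n j (j + 2) τ σ * f σ ^ 2)
        = ∑ σ, (piLev μ n j τ * PupM μ n j (j + 2) τ σ) * f σ ^ 2 := by
      intro τ
      rw [Finset.mul_sum]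
      exact Finset.sum_congr rfl fun σ _ => (mul_assoc _ _ _).symm
    rw [Finset.sum_congr rfl fun τ _ => e τ, Finset.sum_comm]
    exact Finset.sum_congr rfl fun σ _ => by rw [← Finset.sum_mul, hcol σ]
  have hterm : ∀ τ : Finset E,
      piLev μ n j τ * varw (fun σ => PupM μ n j (j + 2) τ σ) f
        = piLev μ n j τ * (∑ σ, PupM μ n j (j + 2) τ σ * f σ ^ 2)
          - piLev μ n j τ * ((PupM μ n j (j + 2)).mulVec f τ) ^ 2 := by
    intro τ
    by_cases hz : piLev μ n j τ = 0
    · rw [hz]; ring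
    · rw [varw_eq _ _ (hrow τ hz), hmulVec]
      ring
  rw [varw_eq _ _ h2sum, varw_eq _ _ h0sum,
    Finset.sum_congr rfl fun τ _ => hterm τ, Finset.sum_sub_distrib, hsq, hM]
  ring
end

section
/- Shattering lemma: let G = (V,E) be a graph with n vertices and maximum degree Δ, let 0 < α < 1, and choose S ⊂ V uniformly at random among sets of size αn. Then for every vertex v and every integer k ≥ 1, the probability that v lies in a connected component of size exactly k in the induced subgraph G[S] is at most α·(6Δα)^{k-1}. -/
open Finset
open scoped Classical

section Aux
set_option linter.unusedSectionVars false
open SimpleGraph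

variable {V : Type*} [Fintype V] [DecidableEq V]

noncomputable def nbr (G : SimpleGraph V) (u : V) (i : ℕ) : V :=
  (G.neighborFinset u).toList.getD i u

lemma nbr_spec (G : SimpleGraph V) {Δ : ℕ} (hΔ : ∀ x, G.degree x ≤ Δ) {u y : V}
    (h : G.Adj u y) : ∃ i : ℕ, i < Δ ∧ nbr G u i = y := by
  have hymem : y ∈ (G.neighborFinset u).toList := by
    rw [Finset.mem_toList]; simpa using h
  have hlt := List.idxOf_lt_length_iff.2 hymem
  refine ⟨(G.neighborFinset u).toList.idxOf y, ?_, ?_⟩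
  · calc _ < (G.neighborFinset u).toList.length := hlt
      _ ≤ Δ := by rw [Finset.length_toList]; exact hΔ u
  · unfold nbr
    rw [List.getD_eq_get (i := ⟨_, hlt⟩)]
    exact List.idxOf_get _

/-- Trim a walk so that the start vertex occurs exactly once. -/
lemma trim_walk (G : SimpleGraph V) {u x : V} (p : G.Walk u x) :
    ∃ q : G.Walk u x, (∀ z ∈ q.support, z ∈ p.support) ∧ q.support.count u = 1 := by
  have hu' : u ∈ p.reverse.support := by
    rw [Walk.support_reverse, List.mem_reverse]; exact p.start_mem_support
  refine ⟨(p.reverse.takeUntil u hu').reverse, ?_, ?_⟩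
  · intro z hz
    rw [Walk.support_reverse, List.mem_reverse] at hz
    have := Walk.support_takeUntil_subset _ hu' hz
    rw [Walk.support_reverse, List.mem_reverse] at this
    exact this
  · rw [Walk.support_reverse, List.count_reverse]
    exact Walk.count_support_takeUntil_eq_one _ hu'

lemma not_mem_drop (G : SimpleGraph V) {u x z : V} (q : G.Walk u x)
    (hcount : q.support.count u = 1) (hz : z ∈ q.support) (hzu : z ≠ u) :
    u ∉ (q.dropUntil z hz).support := by
  have hspec := q.take_spec hz
  have hsupp : q.support = (q.takeUntil z hz).support ++ (q.dropUntil z hz).support.tail := by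
    conv_lhs => rw [← hspec]
    exact Walk.support_append _ _
  have h1 : 1 ≤ (q.takeUntil z hz).support.count u :=
    List.one_le_count_iff.2 (q.takeUntil z hz).start_mem_support
  have h0 : (q.dropUntil z hz).support.tail.count u = 0 := by
    rw [hsupp, List.count_append] at hcount; omega
  rw [(q.dropUntil z hz).support_eq_cons]
  simp only [List.mem_cons, not_or]
  refine ⟨fun h => hzu h.symm, ?_⟩
  rw [← List.count_eq_zero] at *
  exact h0



/-- DFS machine: given current vertex, stack, instruction list, return
(final vertex, final stack, visited set). -/
noncomputable def run (G : SimpleGraph V) {Δ : ℕ} :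
    V → List V → List (Option (Fin Δ)) → V × List V × Finset V
  | u, st, [] => (u, st, {u})
  | u, [], none :: L => let r := run G u [] L; (r.1, r.2.1, insert u r.2.2)
  | u, w :: st, none :: L => let r := run G w st L; (r.1, r.2.1, insert u r.2.2)
  | u, st, some i :: L => let r := run G (nbr G u i) (u :: st) L; (r.1, r.2.1, insert u r.2.2)

lemma run_self_mem (G : SimpleGraph V) {Δ : ℕ} :
    ∀ (L : List (Option (Fin Δ))) (u : V) (st : List V), u ∈ (run G u st L).2.2 := by
  intro L
  induction L with
  | nil => intro u st; simp [run]
  | cons a L ih =>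
    intro u st
    match a, st with
    | none, [] => simp [run]
    | none, w :: st => simp [run]
    | some i, st => simp [run]

lemma run_append (G : SimpleGraph V) {Δ : ℕ} :
    ∀ (L M : List (Option (Fin Δ))) (u : V) (st : List V),
      run G u st (L ++ M)
        = ((run G (run G u st L).1 (run G u st L).2.1 M).1,
           (run G (run G u st L).1 (run G u st L).2.1 M).2.1,
           (run G u st L).2.2 ∪ (run G (run G u st L).1 (run G u st L).2.1 M).2.2) := by
  intro L
  induction L with
  | nil =>
    intro M u st
    have h := run_self_mem G M u st
    simp only [List.nil_append, run]
    refine Prod.ext rfl (Prod.ext rfl ?_)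
    simp only []
    exact (Finset.union_eq_right.2 (Finset.singleton_subset_iff.2 h)).symm
  | cons a L ih =>
    intro M u st
    match a, st with
    | none, [] =>
      simp only [List.cons_append, run, List.append_eq, ih, Finset.insert_union]
    | none, w :: st =>
      simp only [List.cons_append, run, List.append_eq, ih, Finset.insert_union]
    | some i, st =>
      simp only [List.cons_append, run, List.append_eq, ih, Finset.insert_union]

/-- Main DFS lemma: every connected set `T` containing `u` is the visited set of
some instruction list of length `2(|T|-1)` with `|T|-1` forward moves. -/
lemma exists_program (G : SimpleGraph V) (Δ : ℕ) (hΔ : ∀ x, G.degree x ≤ Δ) :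
    ∀ (N : ℕ) (T : Finset V), T.card ≤ N → ∀ u ∈ T,
      (∀ w ∈ T, ∃ p : G.Walk u w, ∀ x ∈ p.support, x ∈ T) →
      ∃ L : List (Option (Fin Δ)), L.length = 2 * (T.card - 1) ∧
        L.countP (fun o => o.isSome) = T.card - 1 ∧
        ∀ st, run G u st L = (u, st, T) := by
  intro N
  induction N with
  | zero =>
    intro T hN u hu _
    exact absurd (card_pos.2 ⟨u, hu⟩) (by omega)
  | succ N ih =>
    intro T hN u hu hconn
    by_cases hT1 : T = {u}
    · subst hT1
      refine ⟨[], by simp, by simp, fun st => ?_⟩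
      simp [run]
    · obtain ⟨w, hwT, hwu⟩ : ∃ w ∈ T, w ≠ u := by
        by_contra h
        push_neg at h
        exact hT1 (Finset.eq_singleton_iff_unique_mem.2 ⟨hu, fun x hx => h x hx⟩)
      obtain ⟨p, hp⟩ := hconn w hwT
      cases p with
      | nil => exact absurd rfl hwu
      | @cons _ y _ hadj q =>
        have hy : y ∈ T := hp y (by simp)
        have hyu : y ≠ u := fun h => G.loopless.irrefl u (h ▸ hadj)
        set U := T.erase u with hU
        set C := U.filter (fun x => ∃ r : G.Walk y x, ∀ z ∈ r.support, z ∈ U) with hCdef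
        have hyU : y ∈ U := Finset.mem_erase.2 ⟨hyu, hy⟩
        have hyC : y ∈ C := Finset.mem_filter.2 ⟨hyU, ⟨Walk.nil, by simpa using hyU⟩⟩
        have hCU : C ⊆ U := filter_subset _ _
        have hCT : C ⊆ T := hCU.trans (erase_subset _ _)
        have huC : u ∉ C := fun h => (Finset.mem_erase.1 (hCU h)).1 rfl
        have hCconn : ∀ x ∈ C, ∃ r : G.Walk y x, ∀ z ∈ r.support, z ∈ C := by
          intro x hx
          obtain ⟨-, r, hr⟩ := Finset.mem_filter.1 hx
          refine ⟨r, fun z hz => Finset.mem_filter.2 ⟨hr z hz,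
            ⟨r.takeUntil z hz, fun a ha => hr a (r.support_takeUntil_subset hz ha)⟩⟩⟩
        set T' := T \ C with hT'def
        have huT' : u ∈ T' := Finset.mem_sdiff.2 ⟨hu, huC⟩
        have hT'conn : ∀ x ∈ T', ∃ r : G.Walk u x, ∀ z ∈ r.support, z ∈ T' := by
          intro x hx
          obtain ⟨hxT, hxC⟩ := Finset.mem_sdiff.1 hx
          obtain ⟨p₀, hp₀⟩ := hconn x hxT
          obtain ⟨q₀, hq₀sub, hq₀cnt⟩ := trim_walk G p₀
          have hq₀T : ∀ z ∈ q₀.support, z ∈ T := fun z hz => hp₀ z (hq₀sub z hz)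
          refine ⟨q₀, fun z hz => Finset.mem_sdiff.2 ⟨hq₀T z hz, fun hzC => ?_⟩⟩
          -- z ∈ C leads to x ∈ C, contradiction
          have hzu : z ≠ u := fun h => huC (h ▸ hzC)
          have hnotu := not_mem_drop G q₀ hq₀cnt hz hzu
          have hdropU : ∀ a ∈ (q₀.dropUntil z hz).support, a ∈ U := by
            intro a ha
            refine Finset.mem_erase.2 ⟨fun h => hnotu (h ▸ ha), hq₀T a (q₀.support_dropUntil_subset hz ha)⟩
          obtain ⟨-, r, hr⟩ := Finset.mem_filter.1 hzC
          have hxU : x ∈ U := hdropU x (q₀.dropUntil z hz).end_mem_support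
          refine hxC (Finset.mem_filter.2 ⟨hxU, ⟨r.append (q₀.dropUntil z hz), ?_⟩⟩)
          intro a ha
          rw [Walk.mem_support_append_iff] at ha
          rcases ha with ha | ha
          · exact hr a ha
          · exact hdropU a ha
        have hCcard : C.card ≤ T.card := card_le_card hCT
        have hcard : C.card + T'.card = T.card := by
          rw [hT'def, card_sdiff_of_subset hCT]; omega
        have hC1 : 1 ≤ C.card := card_pos.2 ⟨y, hyC⟩
        have hT'1 : 1 ≤ T'.card := card_pos.2 ⟨u, huT'⟩
        have hCN : C.card ≤ N := by
          have : u ∈ T := hu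
          have hlt : C.card < T.card := card_lt_card ⟨hCT, fun hsub => huC (hsub hu)⟩
          omega
        have hT'N : T'.card ≤ N := by
          have hlt : T'.card < T.card :=
            card_lt_card ⟨sdiff_subset, fun hsub => (Finset.mem_sdiff.1 (hsub hy)).2 hyC⟩
          omega
        obtain ⟨L₁, hl1, hc1, hr1⟩ := ih C hCN y hyC hCconn
        obtain ⟨L₂, hl2, hc2, hr2⟩ := ih T' hT'N u huT' hT'conn
        obtain ⟨i₀, hi₀, hnbr⟩ := nbr_spec G hΔ hadj
        refine ⟨some ⟨i₀, hi₀⟩ :: (L₁ ++ (none :: L₂)), ?_, ?_, ?_⟩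
        · simp only [List.length_cons, List.length_append, hl1, hl2]
          omega
        · simp [List.countP_cons, List.countP_append, hc1, hc2]
          omega
        · intro st
          have step1 : run G u st (some ⟨i₀, hi₀⟩ :: (L₁ ++ none :: L₂))
              = ((run G (nbr G u i₀) (u :: st) (L₁ ++ none :: L₂)).1,
                 (run G (nbr G u i₀) (u :: st) (L₁ ++ none :: L₂)).2.1,
                 insert u (run G (nbr G u i₀) (u :: st) (L₁ ++ none :: L₂)).2.2) := by
            simp [run]
          rw [step1, hnbr, run_append, hr1 (u :: st)]
          have step2 : run G y (u :: st) (none :: L₂)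
              = ((run G u st L₂).1, (run G u st L₂).2.1, insert y (run G u st L₂).2.2) := by
            simp [run]
          rw [step2, hr2 st]
          simp only
          refine Prod.ext rfl (Prod.ext rfl ?_)
          simp only
          have : C ∪ insert y T' = T := by
            rw [Finset.union_insert, Finset.insert_eq_self.2 (Finset.mem_union_left _ hyC)]
            exact Finset.union_sdiff_of_subset hCT
          rw [this, Finset.insert_eq_self.2 hu]


lemma length_filterMap_id {β : Type*} :
    ∀ l : List (Option β), (l.filterMap id).length = l.countP (fun o => o.isSome)
  | [] => rfl
  | none :: l => by
      simp [List.filterMap_cons, List.countP_cons, length_filterMap_id l]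
      exact length_filterMap_id l
  | some a :: l => by
      simp [List.filterMap_cons, List.countP_cons, length_filterMap_id l]
      exact length_filterMap_id l

lemma list_eq_of_map_filterMap {β : Type*} :
    ∀ (l l' : List (Option β)), l.map Option.isSome = l'.map Option.isSome →
      l.filterMap id = l'.filterMap id → l = l'
  | [], [], _, _ => rfl
  | [], _ :: _, h, _ => by simp at h
  | _ :: _, [], h, _ => by simp at h
  | a :: l, a' :: l', h, h2 => by
      simp only [List.map_cons, List.cons.injEq] at h
      obtain ⟨h1, hrest⟩ := h
      match a, a', h1 with
      | none, none, _ =>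
          simp only [List.filterMap_cons, id] at h2
          rw [list_eq_of_map_filterMap l l' hrest h2]
      | some b, some b', _ =>
          simp only [List.filterMap_cons, id, List.cons.injEq] at h2
          rw [h2.1, list_eq_of_map_filterMap l l' hrest h2.2]

-- count the "programs" set
lemma D_card_le {Δ N j : ℕ} :
    ((univ : Finset (Fin N → Option (Fin Δ))).filter
        (fun s => (List.ofFn s).countP (fun o => o.isSome) = j)).card ≤ 2 ^ N * Δ ^ j := by
  rcases Nat.eq_zero_or_pos Δ with rfl | hΔpos
  · rcases Nat.eq_zero_or_pos j with rfl | hj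
    · calc _ ≤ (univ : Finset (Fin N → Option (Fin 0))).card := card_filter_le _ _
        _ = 1 := by simp
        _ ≤ 2 ^ N * 0 ^ 0 := by simpa using Nat.one_le_two_pow
    · have : ((univ : Finset (Fin N → Option (Fin 0))).filter
          (fun s => (List.ofFn s).countP (fun o => o.isSome) = j)) = ∅ := by
        refine Finset.filter_eq_empty_iff.2 (fun s _ => ?_)
        intro hcnt
        have : 0 < (List.ofFn s).countP (fun o => o.isSome) := by omega
        obtain ⟨o, -, ho⟩ := List.countP_pos_iff.1 this
        obtain ⟨x, rfl⟩ := Option.isSome_iff_exists.1 ho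
        exact x.elim0
      rw [this]
      simp
  · set f : (Fin N → Option (Fin Δ)) → (Fin N → Bool) × (Fin j → Fin Δ) :=
      fun s => (fun i => (s i).isSome,
        fun t => ((List.ofFn s).filterMap id).getD t ⟨0, hΔpos⟩) with hf
    have hinj : Set.InjOn f ((univ : Finset (Fin N → Option (Fin Δ))).filter
        (fun s => (List.ofFn s).countP (fun o => o.isSome) = j)) := by
      intro s hs s' hs' hfe
      simp only [coe_filter, Set.mem_setOf_eq] at hs hs'
      have h1 : (fun i => (s i).isSome) = (fun i => (s' i).isSome) :=
        congrArg Prod.fst hfe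
      have h2 := congrArg Prod.snd hfe
      simp only [hf] at h2
      have hmap : (List.ofFn s).map Option.isSome = (List.ofFn s').map Option.isSome := by
        rw [List.map_ofFn, List.map_ofFn]
        exact congrArg List.ofFn h1
      have hl : ((List.ofFn s).filterMap id).length = j := by
        rw [length_filterMap_id]; exact hs.2
      have hl' : ((List.ofFn s').filterMap id).length = j := by
        rw [length_filterMap_id]; exact hs'.2
      have hfm : (List.ofFn s).filterMap id = (List.ofFn s').filterMap id := by
        apply List.ext_getElem (by rw [hl, hl'])
        intro i hi1 hi2
        have hij : i < j := by omega
        have := congrFun h2 ⟨i, hij⟩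
        beta_reduce at this
        rw [List.getD_eq_getElem?_getD, List.getD_eq_getElem?_getD,
          List.getElem?_eq_getElem (by omega : i < ((List.ofFn s).filterMap id).length),
          List.getElem?_eq_getElem (by omega : i < ((List.ofFn s').filterMap id).length)] at this
        simpa [List.getD_eq_getElem?_getD,
          List.getElem?_eq_getElem (by omega : i < ((List.ofFn s).filterMap id).length),
          List.getElem?_eq_getElem (by omega : i < ((List.ofFn s').filterMap id).length)]
          using this
      exact List.ofFn_inj.1 (list_eq_of_map_filterMap _ _ hmap hfm)
    calc _ ≤ (univ : Finset ((Fin N → Bool) × (Fin j → Fin Δ))).card :=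
          Finset.card_le_card_of_injOn f (fun s _ => mem_univ _) hinj
      _ = 2 ^ N * Δ ^ j := by
          rw [card_univ, Fintype.card_prod, Fintype.card_fun, Fintype.card_fun,
            Fintype.card_bool, Fintype.card_fin, Fintype.card_fin, Fintype.card_fin]


/-- number of `m`-subsets of `univ` containing a fixed `k`-set `T`. -/
lemma card_supersets {V : Type*} [Fintype V] [DecidableEq V] (T : Finset V)
    {n m k : ℕ} (hn : Fintype.card V = n) (hT : T.card = k) (hkm : k ≤ m) :
    ((univ : Finset (Finset V)).filter (fun S => S.card = m ∧ T ⊆ S)).card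
      = (n - k).choose (m - k) := by
  have key : ((univ : Finset (Finset V)).filter (fun S => S.card = m ∧ T ⊆ S)).card
      = ((univ \ T).powersetCard (m - k)).card := by
    apply Finset.card_bij' (fun S _ => S \ T) (fun A _ => A ∪ T)
    · intro S hS
      obtain ⟨hSm, hTS⟩ := (Finset.mem_filter.1 hS).2
      refine Finset.mem_powersetCard.2 ⟨sdiff_subset_sdiff (subset_univ S) le_rfl, ?_⟩
      rw [card_sdiff_of_subset hTS, hSm, hT]
    · intro A hA
      obtain ⟨hAsub, hAcard⟩ := Finset.mem_powersetCard.1 hA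
      have hdisj : Disjoint A T := by
        refine Finset.disjoint_left.2 fun a haA haT => ?_
        exact (Finset.mem_sdiff.1 (hAsub haA)).2 haT
      simp only [mem_filter, mem_univ, true_and]
      constructor
      · rw [Finset.card_union_of_disjoint hdisj, hAcard, hT]
        have hkn : k ≤ n := by
          rw [← hT, ← hn]; exact card_le_card (subset_univ T) |>.trans (by rw [card_univ])
        omega
      · exact subset_union_right
    · intro S hS
      obtain ⟨hSm, hTS⟩ := (Finset.mem_filter.1 hS).2
      exact Finset.sdiff_union_of_subset hTS
    · intro A hA
      obtain ⟨hAsub, -⟩ := Finset.mem_powersetCard.1 hA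
      have hdisj : Disjoint A T := by
        refine Finset.disjoint_left.2 fun a haA haT => ?_
        exact (Finset.mem_sdiff.1 (hAsub haA)).2 haT
      rw [Finset.union_sdiff_cancel_right hdisj]
  rw [key, Finset.card_powersetCard, card_sdiff_of_subset (subset_univ T), card_univ, hn, hT]

/-- `n^k · C(n-k, m-k) ≤ m^k · C(n, m)`. -/
lemma choose_bound : ∀ (k m n : ℕ), k ≤ m → m ≤ n →
    n ^ k * (n - k).choose (m - k) ≤ m ^ k * n.choose m := by
  intro k
  induction k with
  | zero => intro m n _ _; simp
  | succ k ih =>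
    intro m n hk hmn
    have hkm : k ≤ m := by omega
    have key : (n - k) * (n - (k+1)).choose (m - (k+1)) = (m - k) * (n - k).choose (m - k) := by
      have h1 : n - (k+1) = (n - k) - 1 := by omega
      have h2 : m - (k+1) = (m - k) - 1 := by omega
      have h3 : 1 ≤ m - k := by omega
      have h4 : 1 ≤ n - k := by omega
      rw [h1, h2]
      have := Nat.add_one_mul_choose_eq ((n - k) - 1) ((m - k) - 1)
      rw [Nat.sub_add_cancel h4, Nat.sub_add_cancel h3] at this
      rw [this]
      ring
    have hpos : 0 < n - k := by omega
    apply Nat.le_of_mul_le_mul_right _ hpos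
    calc n ^ (k+1) * (n - (k+1)).choose (m - (k+1)) * (n - k)
        = n * ((n - k) * (n - (k+1)).choose (m - (k+1))) * n ^ k := by ring
      _ = n * ((m - k) * (n - k).choose (m - k)) * n ^ k := by rw [key]
      _ = (n * (m - k)) * (n ^ k * (n - k).choose (m - k)) := by ring
      _ ≤ (n * (m - k)) * (m ^ k * n.choose m) := Nat.mul_le_mul_left _ (ih m n hkm hmn)
      _ ≤ (m * (n - k)) * (m ^ k * n.choose m) := by
          apply Nat.mul_le_mul_right
          rw [Nat.mul_sub, Nat.mul_sub]
          have h1 : m * k ≤ n * k := Nat.mul_le_mul_right k hmn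
          have h2 : n * m = m * n := Nat.mul_comm n m
          omega
      _ = m ^ (k+1) * n.choose m * (n - k) := by ring

end Aux

/-- The size of the connected component containing `v` in the subgraph of `G`
induced by `S` (0 if `v ∉ S`): the number of `w ∈ S` reachable from `v` by a
walk staying inside `S`. -/
noncomputable def compSize {V : Type*} [Fintype V] [DecidableEq V]
    (G : SimpleGraph V) (S : Finset V) (v : V) : ℕ :=
  (S.filter (fun w => ∃ p : G.Walk v w, ∀ x ∈ p.support, x ∈ S)).card

/-- Shattering lemma: for a graph of maximum degree `Δ` on `n`
vertices and a uniformly random set `S` of size `αn`, the probability that `v`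
lies in a component of `G[S]` of size exactly `k ≥ 1` is at most `α·(6Δα)^{k-1}`. -/
theorem shattering_lemma {V : Type*} [Fintype V] [DecidableEq V]
    (G : SimpleGraph V) (n Δ m k : ℕ) (hn : Fintype.card V = n)
    (hΔ : ∀ v : V, G.degree v ≤ Δ)
    (hm : m ≤ n) (α : ℝ) (hα : α = (m : ℝ) / n) (hα0 : 0 < α) (hα1 : α < 1)
    (v : V) (hk : 1 ≤ k) :
    ((univ.filter (fun S : Finset V => S.card = m ∧ compSize G S v = k)).card : ℝ)
        / (n.choose m : ℝ)
      ≤ α * (6 * Δ * α) ^ (k - 1) := by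
  set E := univ.filter (fun S : Finset V => S.card = m ∧ compSize G S v = k) with hE
  have hn0 : 0 < n := by rw [← hn]; exact Fintype.card_pos_iff.2 ⟨v⟩
  have hRHS0 : 0 ≤ α * (6 * Δ * α) ^ (k - 1) := by positivity
  -- component of S
  set comp : Finset V → Finset V :=
    fun S => S.filter (fun w => ∃ p : G.Walk v w, ∀ x ∈ p.support, x ∈ S) with hcomp
  have hcompcard : ∀ S, compSize G S v = (comp S).card := fun S => rfl
  have hcompsub : ∀ S, comp S ⊆ S := fun S => filter_subset _ _
  have hcompmem : ∀ S, (comp S).Nonempty → v ∈ comp S := by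
    intro S ⟨w, hw⟩
    obtain ⟨hwS, p, hp⟩ := Finset.mem_filter.1 hw
    have hvS : v ∈ S := hp v p.start_mem_support
    exact Finset.mem_filter.2 ⟨hvS, SimpleGraph.Walk.nil, by simpa using hvS⟩
  by_cases hkm : k ≤ m
  swap
  · -- k > m : the event is empty
    have hEempty : E = ∅ := by
      refine Finset.filter_eq_empty_iff.2 (fun S _ => ?_)
      rintro ⟨hSm, hSk⟩
      have : (comp S).card ≤ S.card := card_le_card (hcompsub S)
      rw [← hcompcard S, hSk, hSm] at this
      omega
    rw [hEempty]
    simpa using hRHS0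
  -- main case
  set j := k - 1 with hj
  set N := 2 * j with hN
  set 𝒯 := univ.filter (fun T : Finset V => T.card = k ∧ v ∈ T ∧
      ∀ w ∈ T, ∃ p : G.Walk v w, ∀ x ∈ p.support, x ∈ T) with h𝒯
  -- Step A : E is covered by the supersets of members of 𝒯
  have hcover : E ⊆ 𝒯.biUnion (fun T =>
      univ.filter (fun S : Finset V => S.card = m ∧ T ⊆ S)) := by
    intro S hS
    obtain ⟨hSm, hSk⟩ := (Finset.mem_filter.1 hS).2
    have hTk : (comp S).card = k := by rw [← hcompcard S, hSk]
    have hvT : v ∈ comp S := hcompmem S (card_pos.1 (by omega))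
    refine Finset.mem_biUnion.2 ⟨comp S, ?_, ?_⟩
    · refine Finset.mem_filter.2 ⟨mem_univ _, hTk, hvT, ?_⟩
      intro w hw
      obtain ⟨hwS, p, hp⟩ := Finset.mem_filter.1 hw
      refine ⟨p, fun x hx => ?_⟩
      exact Finset.mem_filter.2 ⟨hp x hx,
        ⟨p.takeUntil x hx, fun a ha => hp a (p.support_takeUntil_subset hx ha)⟩⟩
    · exact Finset.mem_filter.2 ⟨mem_univ _, hSm, hcompsub S⟩
  -- Step B : count
  have hstepB : E.card ≤ 𝒯.card * (n - k).choose (m - k) := by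
    calc E.card ≤ (𝒯.biUnion (fun T =>
        univ.filter (fun S : Finset V => S.card = m ∧ T ⊆ S))).card := card_le_card hcover
      _ ≤ ∑ T ∈ 𝒯, (univ.filter (fun S : Finset V => S.card = m ∧ T ⊆ S)).card :=
        card_biUnion_le
      _ = ∑ T ∈ 𝒯, (n - k).choose (m - k) := by
        refine Finset.sum_congr rfl (fun T hT => ?_)
        exact card_supersets T hn (Finset.mem_filter.1 hT).2.1 hkm
      _ = 𝒯.card * (n - k).choose (m - k) := by rw [Finset.sum_const, smul_eq_mul]
  -- Step C : 𝒯.card ≤ D.card via surjection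
  set D := ((univ : Finset (Fin N → Option (Fin Δ))).filter
      (fun s => (List.ofFn s).countP (fun o => o.isSome) = j)) with hD
  have hstepC : 𝒯.card ≤ D.card := by
    apply Finset.card_le_card_of_surjOn (fun s => (run G v [] (List.ofFn s)).2.2)
    intro T hT
    obtain ⟨hTk, hvT, hTconn⟩ := (Finset.mem_filter.1 (by exact hT)).2
    obtain ⟨L, hlen, hcnt, hrun⟩ :=
      exists_program G Δ hΔ T.card T le_rfl v hvT hTconn
    have hlenN : L.length = N := by rw [hlen, hTk]
    set s : Fin N → Option (Fin Δ) :=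
      fun i => L[(i : ℕ)]'(by rw [hlenN]; exact i.isLt) with hs
    have hofn : List.ofFn s = L := by
      apply List.ext_getElem (by simp [hlenN])
      intro i h1 h2
      simp [hs]
    refine ⟨s, ?_, ?_⟩
    · simp only [hD, coe_filter, Set.mem_setOf_eq]
      exact ⟨mem_univ _, by rw [hofn, hcnt, hTk]⟩
    · show (run G v [] (List.ofFn s)).2.2 = T
      rw [hofn, hrun []]
  -- Step D
  have hstepD : D.card ≤ 2 ^ N * Δ ^ j := D_card_le
  -- real-number computations
  have hchoosepos : (0:ℝ) < (n.choose m : ℝ) := by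
    exact_mod_cast Nat.choose_pos hm
  have hCC : ((n - k).choose (m - k) : ℝ) ≤ ((m : ℝ) / n) ^ k * (n.choose m : ℝ) := by
    have hnat := choose_bound k m n hkm hm
    have hnk : (0:ℝ) < ((n : ℝ)) ^ k := by positivity
    rw [div_pow, div_mul_eq_mul_div, le_div_iff₀ hnk]
    calc ((n - k).choose (m - k) : ℝ) * (n:ℝ) ^ k
        = ((n ^ k * (n - k).choose (m - k) : ℕ) : ℝ) := by push_cast; ring
      _ ≤ ((m ^ k * n.choose m : ℕ) : ℝ) := by exact_mod_cast hnat
      _ = (m:ℝ) ^ k * (n.choose m : ℝ) := by push_cast; ring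
  have hEbound : (E.card : ℝ) ≤ (2:ℝ) ^ N * (Δ:ℝ) ^ j * ((n - k).choose (m - k) : ℝ) := by
    have : E.card ≤ 2 ^ N * Δ ^ j * (n - k).choose (m - k) :=
      hstepB.trans (Nat.mul_le_mul_right _ (hstepC.trans hstepD))
    exact_mod_cast this
  rw [div_le_iff₀ hchoosepos]
  have hkey : (E.card : ℝ) ≤ (2:ℝ) ^ N * (Δ:ℝ) ^ j * (((m : ℝ) / n) ^ k * (n.choose m : ℝ)) := by
    refine hEbound.trans ?_
    apply mul_le_mul_of_nonneg_left hCC (by positivity)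
  refine hkey.trans ?_
  rw [← hα]
  have hΔα : (0:ℝ) ≤ (Δ:ℝ) * α := by positivity
  have hkj : k = j + 1 := by omega
  have heq : (2:ℝ) ^ N * (Δ:ℝ) ^ j * (α ^ k * (n.choose m : ℝ))
      = (α * (4 * Δ * α) ^ j) * (n.choose m : ℝ) := by
    rw [hN, hkj, pow_mul]
    norm_num
    ring
  rw [heq]
  apply mul_le_mul_of_nonneg_right _ (le_of_lt hchoosepos)
  have hmono : ((4:ℝ) * Δ * α) ^ j ≤ ((6:ℝ) * Δ * α) ^ j := by
    apply pow_le_pow_left₀ (by positivity)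
    nlinarith
  have : α * (4 * Δ * α) ^ j ≤ α * (6 * Δ * α) ^ j :=
    mul_le_mul_of_nonneg_left hmono (le_of_lt hα0)
  simpa [hj] using this
end

section
/- For a rank-2 matroid M, the graph G_M whose vertices are elements of the ground set and whose edges are the bases of M is a complete multipartite graph plus isolated vertices; consequently the second eigenvalue of the simple random walk on G_M is at most 0, i.e., γ(Q_M) ≥ 1. -/
/-!
By the exchange axiom a nonloop is adjacent to an endpoint of every edge avoiding it, so
non-adjacency is transitive on the non-isolated vertices of the basis graph: they span a complete
multipartite graph, and loops are isolated.

Let `Q v = t v` with `t > 0`. Non-adjacent non-isolated vertices have the same neighbourhood, so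
`v` is constant on each part and vanishes on isolated vertices. With `n` the number of
non-isolated vertices, `S` the sum of `v` over them and `d a` the degree, this gives
`v a * (n + (t - 1) d a) = S`. As `v ≠ 0` forces `S ≠ 0`, the numbers `1 / (n + (t - 1) d a)` sum
to `1 = ∑ 1 / n`, i.e. `(1 - t) ∑ d a / (n + (t - 1) d a) = 0`, whence `t = 1`.
-/

open Finset
open scoped Classical Matrix

theorem eq_one_of_sum_inv_card_add_mul_eq_one {ι : Type*} {N : Finset ι} {d : ι → ℝ} {t : ℝ}
    (hN : N.Nonempty) (hd : ∀ a ∈ N, 0 < d a) (hc : ∀ a ∈ N, 0 < #N + (t - 1) * d a)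
    (hsum : ∑ a ∈ N, (#N + (t - 1) * d a)⁻¹ = 1) : t = 1 := by
  have hweighted : (1 - t) * ∑ a ∈ N, d a / (#N + (t - 1) * d a) = 0 := calc
    _ = ∑ a ∈ N, (#N * (#N + (t - 1) * d a)⁻¹ - 1) := by
      rw [mul_sum]
      refine sum_congr rfl fun a ha => ?_
      rw [← mul_div_assoc, show (1 - t) * d a = #N - (#N + (t - 1) * d a) by ring, sub_div,
        div_self (hc a ha).ne', div_eq_mul_inv]
    _ = 0 := by rw [sum_sub_distrib, ← mul_sum, hsum]; simp
  have hpos : 0 < ∑ a ∈ N, d a / (#N + (t - 1) * d a) :=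
    sum_pos (fun a ha => div_pos (hd a ha) (hc a ha)) hN
  linarith [(mul_eq_zero.mp hweighted).resolve_right hpos.ne']

namespace SimpleGraph

variable {V : Type*} {G : SimpleGraph V}

theorem adj_of_not_adj_of_adj (hG : (G.induce G.support).IsCompleteMultipartite)
    {a b c : V} (ha : a ∈ G.support) (hb : b ∈ G.support) (hab : ¬G.Adj a b)
    (hbc : G.Adj b c) : G.Adj a c := by
  by_contra hac
  exact hG.trans ⟨b, hb⟩ ⟨a, ha⟩ ⟨c, hbc.mem_support_right⟩ (fun h => hab h.symm) hac hbc

variable [Fintype V] [DecidableRel G.Adj]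

theorem neighborFinset_eq_of_not_adj (hG : (G.induce G.support).IsCompleteMultipartite)
    {a b : V} (ha : a ∈ G.support) (hb : b ∈ G.support) (hab : ¬G.Adj a b) :
    G.neighborFinset a = G.neighborFinset b := by
  ext c
  simp only [mem_neighborFinset]
  exact ⟨adj_of_not_adj_of_adj hG hb ha (fun h => hab h.symm),
    adj_of_not_adj_of_adj hG ha hb hab⟩

theorem neighborFinset_subset_support_toFinset (a : V) :
    G.neighborFinset a ⊆ G.support.toFinset := fun b hb =>
  Set.mem_toFinset.mpr ((G.mem_neighborFinset a b).mp hb).mem_support_right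

theorem degree_lt_card_support_toFinset {a : V} (ha : a ∈ G.support) :
    G.degree a < #G.support.toFinset := by
  rw [← card_neighborFinset_eq_degree]
  exact card_lt_card ⟨neighborFinset_subset_support_toFinset a,
    fun h => G.loopless.irrefl a ((G.mem_neighborFinset a a).mp (h (Set.mem_toFinset.mpr ha)))⟩

variable [DecidableEq V]

-- The simple random walk `D⁻¹ A`; the row of an isolated vertex is zero, as `0⁻¹ = 0`.
variable (G) in
noncomputable def walkMatrix : Matrix V V ℝ :=
  Matrix.diagonal (fun a => (G.degree a : ℝ)⁻¹) * G.adjMatrix ℝ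

theorem walkMatrix_apply (a b : V) :
    G.walkMatrix a b = if G.Adj a b then (G.degree a : ℝ)⁻¹ else 0 := by
  rw [walkMatrix, Matrix.diagonal_mul, adjMatrix_apply]
  split_ifs <;> simp

theorem walkMatrix_mulVec_apply (v : V → ℝ) (a : V) :
    (G.walkMatrix *ᵥ v) a = (G.degree a : ℝ)⁻¹ * ∑ b ∈ G.neighborFinset a, v b := by
  rw [walkMatrix, ← Matrix.mulVec_mulVec, Matrix.mulVec_diagonal, adjMatrix_mulVec_apply]

section Eigenvector

variable {t : ℝ} {v : V → ℝ} (hv : G.walkMatrix *ᵥ v = t • v)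
include hv

theorem eigenvector_mul_degree_eq_sum_neighbor (a : V) :
    t * G.degree a * v a = ∑ b ∈ G.neighborFinset a, v b := by
  have h := congrFun hv a
  rw [walkMatrix_mulVec_apply, Pi.smul_apply, smul_eq_mul] at h
  rcases eq_or_ne (G.degree a) 0 with hd | hd
  · have hnbr : G.neighborFinset a = ∅ := by
      rwa [← card_eq_zero, card_neighborFinset_eq_degree]
    simp [hd, hnbr]
  · rw [mul_right_comm, ← h]
    field_simp

theorem eigenvector_eq_zero_of_notMem_support (ht : t ≠ 0) {a : V} (ha : a ∉ G.support) :
    v a = 0 := by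
  have h := congrFun hv a
  rw [walkMatrix_mulVec_apply, (G.degree_eq_zero_iff_notMem_support a).mpr ha] at h
  simpa [ht] using h.symm

theorem eigenvector_eq_of_not_adj (hG : (G.induce G.support).IsCompleteMultipartite)
    (ht : t ≠ 0) {a b : V} (ha : a ∈ G.support) (hb : b ∈ G.support) (hab : ¬G.Adj a b) :
    v a = v b := by
  have hnbr := neighborFinset_eq_of_not_adj hG ha hb hab
  have hdeg : G.degree a = G.degree b := by
    rw [← card_neighborFinset_eq_degree, ← card_neighborFinset_eq_degree, hnbr]
  have hpos : (0 : ℝ) < G.degree a := by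
    exact_mod_cast (G.degree_pos_iff_mem_support a).mpr ha
  have h := eigenvector_mul_degree_eq_sum_neighbor hv a
  rw [hnbr, ← eigenvector_mul_degree_eq_sum_neighbor hv b, ← hdeg] at h
  exact mul_left_cancel₀ (mul_ne_zero ht hpos.ne') h

theorem eigenvector_mul_eq_sum_support (hG : (G.induce G.support).IsCompleteMultipartite)
    (ht : t ≠ 0) {a : V} (ha : a ∈ G.support) :
    v a * (#G.support.toFinset + (t - 1) * G.degree a) = ∑ b ∈ G.support.toFinset, v b := by
  set N := G.support.toFinset
  have hsub := neighborFinset_subset_support_toFinset (G := G) a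
  have hclass : ∑ b ∈ N \ G.neighborFinset a, v b = #(N \ G.neighborFinset a) * v a := by
    rw [← nsmul_eq_mul, ← sum_const]
    refine sum_congr rfl fun b hb => ?_
    obtain ⟨hbN, hab⟩ := mem_sdiff.mp hb
    exact (eigenvector_eq_of_not_adj hv hG ht ha (Set.mem_toFinset.mp hbN)
      fun h => hab ((G.mem_neighborFinset a b).mpr h)).symm
  have hcard : (#(N \ G.neighborFinset a) : ℝ) = #N - G.degree a := by
    rw [← card_sdiff_add_card_eq_card hsub, card_neighborFinset_eq_degree]
    push_cast
    ring
  rw [← sum_sdiff hsub, hclass, hcard, ← eigenvector_mul_degree_eq_sum_neighbor hv]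
  ring

theorem walkMatrix_eigenvalue_eq_one_or_nonpos
    (hG : (G.induce G.support).IsCompleteMultipartite) (hv0 : v ≠ 0) : t = 1 ∨ t ≤ 0 := by
  rcases le_or_gt t 0 with ht | ht
  · exact .inr ht
  left
  set N := G.support.toFinset
  set S := ∑ b ∈ N, v b
  have hdeg : ∀ a ∈ N, (0 : ℝ) < G.degree a := fun a ha => by
    exact_mod_cast (G.degree_pos_iff_mem_support a).mpr (Set.mem_toFinset.mp ha)
  have hc : ∀ a ∈ N, 0 < (#N : ℝ) + (t - 1) * G.degree a := fun a ha => by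
    have : (G.degree a : ℝ) + 1 ≤ #N := by
      exact_mod_cast degree_lt_card_support_toFinset (Set.mem_toFinset.mp ha)
    nlinarith [hdeg a ha]
  have hvc : ∀ a ∈ N, v a * (#N + (t - 1) * G.degree a) = S := fun a ha =>
    eigenvector_mul_eq_sum_support hv hG ht.ne' (Set.mem_toFinset.mp ha)
  have hS : S ≠ 0 := by
    intro hS
    refine hv0 (funext fun a => ?_)
    by_cases ha : a ∈ N
    · simpa [hS, (hc a ha).ne'] using hvc a ha
    · exact eigenvector_eq_zero_of_notMem_support hv ht.ne' (by simpa [N] using ha)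
  refine eq_one_of_sum_inv_card_add_mul_eq_one (nonempty_of_sum_ne_zero hS) hdeg hc ?_
  refine mul_left_cancel₀ hS ?_
  rw [mul_one, mul_sum]
  refine sum_congr rfl fun a ha => ?_
  rw [← hvc a ha, mul_inv_cancel_right₀ (hc a ha).ne']

end Eigenvector

end SimpleGraph

section RankTwo

variable {E : Type*} [DecidableEq E]

def basisGraph (Ind : Finset E → Prop) : SimpleGraph E where
  Adj a b := a ≠ b ∧ Ind {a, b}
  symm := ⟨fun _ _ h => ⟨h.1.symm, by rw [pair_comm]; exact h.2⟩⟩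
  loopless := ⟨fun _ h => h.1 rfl⟩

variable {Ind : Finset E → Prop}

theorem indep_pair_left_or_right_of_exchange
    (hexch : ∀ S T : Finset E, Ind S → Ind T → S.card < T.card →
      ∃ e ∈ T \ S, Ind (insert e S))
    {i j k : E} (hi : Ind {i}) (hjk : Ind {j, k}) (hne : j ≠ k) : Ind {i, j} ∨ Ind {i, k} := by
  obtain ⟨e, he, hei⟩ := hexch {i} {j, k} hi hjk (by simp [card_pair hne])
  rw [pair_comm] at hei
  rcases mem_insert.mp (mem_sdiff.mp he).1 with rfl | he
  · exact .inl hei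
  · exact .inr (mem_singleton.mp he ▸ hei)

theorem basisGraph_induce_support_isCompleteMultipartite
    (hdown : ∀ S T : Finset E, T ⊆ S → Ind S → Ind T)
    (hexch : ∀ S T : Finset E, Ind S → Ind T → S.card < T.card →
      ∃ e ∈ T \ S, Ind (insert e S)) :
    ((basisGraph Ind).induce (basisGraph Ind).support).IsCompleteMultipartite := by
  refine ⟨fun ⟨a, _⟩ ⟨b, hb⟩ ⟨c, _⟩ hab hbc hac => ?_⟩
  obtain ⟨w, -, hbw⟩ := (SimpleGraph.mem_support _).mp hb
  have hb : Ind {b} := hdown _ _ (by simp) hbw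
  have hb_ne_a : b ≠ a := fun h => hbc (h ▸ hac)
  have hb_ne_c : b ≠ c := fun h => hab (h ▸ hac)
  rcases indep_pair_left_or_right_of_exchange hexch hb hac.2 hac.1 with h | h
  · exact hab ⟨hb_ne_a.symm, by rwa [pair_comm]⟩
  · exact hbc ⟨hb_ne_c, h⟩

theorem basisGraph_degree [Fintype E] (a : E) :
    (basisGraph Ind).degree a = #{c | c ≠ a ∧ Ind {a, c}} := by
  rw [← SimpleGraph.card_neighborFinset_eq_degree]
  congr 1
  ext c
  rw [SimpleGraph.mem_neighborFinset]
  simp [basisGraph, ne_comm]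

end RankTwo

theorem rank_two_matroid_local_walk_general (E : Type*) [Fintype E] [DecidableEq E]
    (Ind : Finset E → Prop)
    (hdown : ∀ S T : Finset E, T ⊆ S → Ind S → Ind T)
    (hexch : ∀ S T : Finset E, Ind S → Ind T → S.card < T.card →
      ∃ e ∈ T \ S, Ind (insert e S))
    (Q : Matrix E E ℝ)
    (hQ : ∀ a b : E, Q a b = if a ≠ b ∧ Ind {a, b} then
        ((univ.filter (fun c => c ≠ a ∧ Ind {a, c})).card : ℝ)⁻¹ else 0) :
    (∀ i j k : E, Ind {i} → Ind {j, k} → j ≠ k → i ≠ j → i ≠ k →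
        Ind {i, j} ∨ Ind {i, k}) ∧
    (∀ (t : ℝ) (v : E → ℝ), v ≠ 0 → Q.mulVec v = t • v → t = 1 ∨ t ≤ 0) := by
  refine ⟨fun i j k hi hjk hne _ _ => indep_pair_left_or_right_of_exchange hexch hi hjk hne,
    fun t v hv0 hv => ?_⟩
  have hQwalk : Q = (basisGraph Ind).walkMatrix := by
    ext a b
    rw [hQ, SimpleGraph.walkMatrix_apply, basisGraph_degree]
    exact if_congr Iff.rfl rfl rfl
  subst hQwalk
  exact SimpleGraph.walkMatrix_eigenvalue_eq_one_or_nonpos hv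
    (basisGraph_induce_support_isCompleteMultipartite hdown hexch) hv0

/-- for a rank-2 matroid `M`, the graph `G_M` whose edges are the
bases of `M` is complete multipartite plus isolated vertices (any independent
element `i` is adjacent to at least one endpoint of every edge), and consequently
every eigenvalue of the simple random walk `Q_M` on `G_M` is `1` or `≤ 0`,
i.e. `γ(Q_M) ≥ 1`. -/
theorem rank_two_matroid_local_walk (E : Type*) [Fintype E] [DecidableEq E]
    (Ind : Finset E → Prop)
    (hempty : Ind ∅)
    (hdown : ∀ S T : Finset E, T ⊆ S → Ind S → Ind T)
    (hexch : ∀ S T : Finset E, Ind S → Ind T → S.card < T.card →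
      ∃ e ∈ T \ S, Ind (insert e S))
    (hrank : ∀ S : Finset E, Ind S → S.card ≤ 2)
    (hbasis : ∃ B : Finset E, Ind B ∧ B.card = 2)
    (Q : Matrix E E ℝ)
    (hQ : ∀ a b : E, Q a b = if a ≠ b ∧ Ind {a, b} then
        ((univ.filter (fun c => c ≠ a ∧ Ind {a, c})).card : ℝ)⁻¹ else 0) :
    (∀ i j k : E, Ind {i} → Ind {j, k} → j ≠ k → i ≠ j → i ≠ k →
        Ind {i, j} ∨ Ind {i, k}) ∧
    (∀ (t : ℝ) (v : E → ℝ), v ≠ 0 → Q.mulVec v = t • v → t = 1 ∨ t ≤ 0) :=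
  rank_two_matroid_local_walk_general E Ind hdown hexch Q hQ
end
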